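/- arXiv:1506.08420 — 4 statements merged into one kernel-verified Lean document; each statement's English description precedes it below -/
import Mathlib

section
/- Let A be a linearly ordered group and G a directed po-group. Then the unrestricted Wreath product A Wr G satisfies RDP₂ if and only if G satisfies RDP₂. -/
/-! Riesz decomposition properties relative to explicit multiplication `mul`,
unit `one`, and order relation `le`, together with the lexicographic product
order and (unrestricted/restricted, right/left) wreath products of po-groups. -/

/-- The Riesz decomposition property (RDP). -/
def RDPWith {M : Type*} (mul : M → M → M) (one : M) (le : M → M → Prop) : Prop :=
  ∀ a₁ a₂ b₁ b₂ : M,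
    le one a₁ → le one a₂ → le one b₁ → le one b₂ → mul a₁ a₂ = mul b₁ b₂ →
    ∃ c₁₁ c₁₂ c₂₁ c₂₂ : M,
      le one c₁₁ ∧ le one c₁₂ ∧ le one c₂₁ ∧ le one c₂₂ ∧
      a₁ = mul c₁₁ c₁₂ ∧ a₂ = mul c₂₁ c₂₂ ∧ b₁ = mul c₁₁ c₂₁ ∧ b₂ = mul c₁₂ c₂₂

/-- The Riesz decomposition property RDP₁ (commutativity below the
cross-diagonal entries `c₁₂`, `c₂₁`). -/
def RDP1With {M : Type*} (mul : M → M → M) (one : M) (le : M → M → Prop) : Prop :=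
  ∀ a₁ a₂ b₁ b₂ : M,
    le one a₁ → le one a₂ → le one b₁ → le one b₂ → mul a₁ a₂ = mul b₁ b₂ →
    ∃ c₁₁ c₁₂ c₂₁ c₂₂ : M,
      le one c₁₁ ∧ le one c₁₂ ∧ le one c₂₁ ∧ le one c₂₂ ∧
      a₁ = mul c₁₁ c₁₂ ∧ a₂ = mul c₂₁ c₂₂ ∧ b₁ = mul c₁₁ c₂₁ ∧ b₂ = mul c₁₂ c₂₂ ∧
      (∀ x y : M, le one x → le x c₁₂ → le one y → le y c₂₁ → mul x y = mul y x)

/-- The Riesz decomposition property RDP₂ (the infimum of `c₁₂` and `c₂₁`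
exists and equals `one`; the last clause, together with `le one c₁₂` and
`le one c₂₁`, says exactly that `one` is the greatest lower bound). -/
def RDP2With {M : Type*} (mul : M → M → M) (one : M) (le : M → M → Prop) : Prop :=
  ∀ a₁ a₂ b₁ b₂ : M,
    le one a₁ → le one a₂ → le one b₁ → le one b₂ → mul a₁ a₂ = mul b₁ b₂ →
    ∃ c₁₁ c₁₂ c₂₁ c₂₂ : M,
      le one c₁₁ ∧ le one c₁₂ ∧ le one c₂₁ ∧ le one c₂₂ ∧
      a₁ = mul c₁₁ c₁₂ ∧ a₂ = mul c₂₁ c₂₂ ∧ b₁ = mul c₁₁ c₂₁ ∧ b₂ = mul c₁₂ c₂₂ ∧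
      (∀ z : M, le z c₁₂ → le z c₂₁ → le z one)

/-- RDP for the sub-po-group carried by the subset `S`. -/
def RDPWithOn {M : Type*} (S : Set M) (mul : M → M → M) (one : M)
    (le : M → M → Prop) : Prop :=
  ∀ a₁ a₂ b₁ b₂ : M, a₁ ∈ S → a₂ ∈ S → b₁ ∈ S → b₂ ∈ S →
    le one a₁ → le one a₂ → le one b₁ → le one b₂ → mul a₁ a₂ = mul b₁ b₂ →
    ∃ c₁₁ c₁₂ c₂₁ c₂₂ : M, c₁₁ ∈ S ∧ c₁₂ ∈ S ∧ c₂₁ ∈ S ∧ c₂₂ ∈ S ∧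
      le one c₁₁ ∧ le one c₁₂ ∧ le one c₂₁ ∧ le one c₂₂ ∧
      a₁ = mul c₁₁ c₁₂ ∧ a₂ = mul c₂₁ c₂₂ ∧ b₁ = mul c₁₁ c₂₁ ∧ b₂ = mul c₁₂ c₂₂

/-- RDP₁ for the sub-po-group carried by the subset `S`. -/
def RDP1WithOn {M : Type*} (S : Set M) (mul : M → M → M) (one : M)
    (le : M → M → Prop) : Prop :=
  ∀ a₁ a₂ b₁ b₂ : M, a₁ ∈ S → a₂ ∈ S → b₁ ∈ S → b₂ ∈ S →
    le one a₁ → le one a₂ → le one b₁ → le one b₂ → mul a₁ a₂ = mul b₁ b₂ →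
    ∃ c₁₁ c₁₂ c₂₁ c₂₂ : M, c₁₁ ∈ S ∧ c₁₂ ∈ S ∧ c₂₁ ∈ S ∧ c₂₂ ∈ S ∧
      le one c₁₁ ∧ le one c₁₂ ∧ le one c₂₁ ∧ le one c₂₂ ∧
      a₁ = mul c₁₁ c₁₂ ∧ a₂ = mul c₂₁ c₂₂ ∧ b₁ = mul c₁₁ c₂₁ ∧ b₂ = mul c₁₂ c₂₂ ∧
      (∀ x y : M, x ∈ S → y ∈ S →
        le one x → le x c₁₂ → le one y → le y c₂₁ → mul x y = mul y x)

/-- RDP₂ for the sub-po-group carried by the subset `S`. -/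
def RDP2WithOn {M : Type*} (S : Set M) (mul : M → M → M) (one : M)
    (le : M → M → Prop) : Prop :=
  ∀ a₁ a₂ b₁ b₂ : M, a₁ ∈ S → a₂ ∈ S → b₁ ∈ S → b₂ ∈ S →
    le one a₁ → le one a₂ → le one b₁ → le one b₂ → mul a₁ a₂ = mul b₁ b₂ →
    ∃ c₁₁ c₁₂ c₂₁ c₂₂ : M, c₁₁ ∈ S ∧ c₁₂ ∈ S ∧ c₂₁ ∈ S ∧ c₂₂ ∈ S ∧
      le one c₁₁ ∧ le one c₁₂ ∧ le one c₂₁ ∧ le one c₂₂ ∧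
      a₁ = mul c₁₁ c₁₂ ∧ a₂ = mul c₂₁ c₂₂ ∧ b₁ = mul c₁₁ c₂₁ ∧ b₂ = mul c₁₂ c₂₂ ∧
      (∀ z : M, z ∈ S → le z c₁₂ → le z c₂₁ → le z one)

/-- The Riesz interpolation property (RIP). -/
def RIPWith {M : Type*} (le : M → M → Prop) : Prop :=
  ∀ a₁ a₂ b₁ b₂ : M, le a₁ b₁ → le a₁ b₂ → le a₂ b₁ → le a₂ b₂ →
    ∃ c : M, le a₁ c ∧ le a₂ c ∧ le c b₁ ∧ le c b₂

/-- RIP for the subposet carried by the subset `S`. -/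
def RIPWithOn {M : Type*} (S : Set M) (le : M → M → Prop) : Prop :=
  ∀ a₁ a₂ b₁ b₂ : M, a₁ ∈ S → a₂ ∈ S → b₁ ∈ S → b₂ ∈ S →
    le a₁ b₁ → le a₁ b₂ → le a₂ b₁ → le a₂ b₂ →
    ∃ c ∈ S, le a₁ c ∧ le a₂ c ∧ le c b₁ ∧ le c b₂

/-- The lexicographic order on a product: `(g₁,h₁) ≤ (g₂,h₂)` iff `g₁ < g₂`,
or `g₁ = g₂` and `h₁ ≤ h₂`. -/
def lexLE {A B : Type*} [PartialOrder A] [LE B] (p q : A × B) : Prop :=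
  p.1 < q.1 ∨ (p.1 = q.1 ∧ p.2 ≤ q.2)

/-- A poset is an antilattice if only comparable pairs of elements have a
join or a meet. -/
def IsAntilattice (G : Type*) [PartialOrder G] : Prop :=
  ∀ a b : G, ((∃ s, IsLUB {a, b} s) ∨ (∃ s, IsGLB {a, b} s)) → a ≤ b ∨ b ≤ a

/-- Multiplication of the unrestricted Wreath product `A Wr G`:
`(n,⟨g_a⟩)·(m,⟨h_a⟩) = (n·m, ⟨g_a·h_{a·n}⟩)`. -/
def wrMul {A G : Type*} [Mul A] [Mul G] (p q : A × (A → G)) : A × (A → G) :=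
  (p.1 * q.1, fun a => p.2 a * q.2 (a * p.1))

/-- The unit of the Wreath product `A Wr G`. -/
def wrOne (A G : Type*) [One A] [One G] : A × (A → G) :=
  (1, fun _ => 1)

/-- The order of the Wreath product `A Wr G`: `(n,⟨g_a⟩) ≤ (m,⟨h_a⟩)` iff
`n < m`, or `n = m` and `g_a ≤ h_a` for all `a`. -/
def wrLE {A G : Type*} [PartialOrder A] [LE G] (p q : A × (A → G)) : Prop :=
  p.1 < q.1 ∨ (p.1 = q.1 ∧ ∀ a, p.2 a ≤ q.2 a)

/-- The carrier of the restricted Wreath product `A wr G`: elements whose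
second component equals `1` at all but finitely many places. -/
def wrS (A G : Type*) [One G] : Set (A × (A → G)) :=
  {p | (Function.mulSupport p.2).Finite}

/-- Multiplication of the wreath products over `ℤ`:
`(n,⟨g_i⟩)·(m,⟨h_i⟩) = (n+m, ⟨g_i·h_{i+n}⟩)`. -/
def zwrMul {G : Type*} [Mul G] (p q : ℤ × (ℤ → G)) : ℤ × (ℤ → G) :=
  (p.1 + q.1, fun i => p.2 i * q.2 (i + p.1))

/-- The unit of the wreath products over `ℤ`. -/
def zwrOne (G : Type*) [One G] : ℤ × (ℤ → G) :=
  (0, fun _ => 1)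

/-- The inverse in the wreath products over `ℤ`. -/
def zwrInv {G : Type*} [Inv G] (p : ℤ × (ℤ → G)) : ℤ × (ℤ → G) :=
  (-p.1, fun i => (p.2 (i - p.1))⁻¹)

/-- The carrier of the (restricted) wreath products over `ℤ`: elements with
`g_i = 1` for all but finitely many `i`. -/
def zwrS (G : Type*) [One G] : Set (ℤ × (ℤ → G)) :=
  {p | (Function.mulSupport p.2).Finite}

/-- Strict positivity in the right wreath product `ℤ →wr G`: either `n > 0`,
or `n = 0`, some `g_i ≠ 1`, and `g_j > 1` where `j` is the greatest index `i`
with `g_i ≠ 1`. -/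
def rPos {G : Type*} [One G] [LT G] (p : ℤ × (ℤ → G)) : Prop :=
  0 < p.1 ∨ (p.1 = 0 ∧ ∃ j : ℤ, 1 < p.2 j ∧ ∀ i : ℤ, j < i → p.2 i = 1)

/-- Strict positivity in the left wreath product `ℤ ←wr G`: either `n > 0`,
or `n = 0`, some `g_i ≠ 1`, and `g_j > 1` where `j` is the least index `i`
with `g_i ≠ 1`. -/
def lPos {G : Type*} [One G] [LT G] (p : ℤ × (ℤ → G)) : Prop :=
  0 < p.1 ∨ (p.1 = 0 ∧ ∃ j : ℤ, 1 < p.2 j ∧ ∀ i : ℤ, i < j → p.2 i = 1)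

/-- The order of the right wreath product `ℤ →wr G`. -/
def rLE {G : Type*} [Group G] [LT G] (p q : ℤ × (ℤ → G)) : Prop :=
  p = q ∨ rPos (zwrMul (zwrInv p) q)

/-- The order of the left wreath product `ℤ ←wr G`. -/
def lLE {G : Type*} [Group G] [LT G] (p q : ℤ × (ℤ → G)) : Prop :=
  p = q ∨ lPos (zwrMul (zwrInv p) q)

/-! If the first coordinates of `a₁` and `b₁` in `A Wr G` differ, say `a₁.1 < b₁.1`, then
`a₁ < b₁` and `(a₁, 1, a₁⁻¹b₁, b₂)` is an RDP₂ decomposition, the infimum condition being trivial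
because `c₁₂ = 1`. If they agree, `a₁a₂ = b₁b₂` amounts to one equation `Pₓ gₓ = Qₓ hₓ` in `G`
per coordinate. Its entries need only be positive where the corresponding first coordinate is
`1`; elsewhere directedness gives common lower bounds `s ≤ Pₓ, Qₓ` and `t ≤ gₓ, hₓ`, and RDP₂ of
`G` applied to `s⁻¹Pₓ · gₓt⁻¹ = s⁻¹Qₓ · hₓt⁻¹` decomposes the coordinate. Conversely `G` sits in
`A Wr G` as the constant functions with first coordinate `1`, and an RDP₂ decomposition there,
read at the coordinate `1`, is one in `G`. -/

def HasRDP2Decomp {M : Type*} (mul : M → M → M) (one : M) (le : M → M → Prop)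
    (a₁ a₂ b₁ b₂ : M) : Prop :=
  ∃ c₁₁ c₁₂ c₂₁ c₂₂ : M,
    le one c₁₁ ∧ le one c₁₂ ∧ le one c₂₁ ∧ le one c₂₂ ∧
    a₁ = mul c₁₁ c₁₂ ∧ a₂ = mul c₂₁ c₂₂ ∧ b₁ = mul c₁₁ c₂₁ ∧ b₂ = mul c₁₂ c₂₂ ∧
    (∀ z : M, le z c₁₂ → le z c₂₁ → le z one)

theorem HasRDP2Decomp.symm {M : Type*} {mul : M → M → M} {one : M} {le : M → M → Prop}
    {a₁ a₂ b₁ b₂ : M} (h : HasRDP2Decomp mul one le a₁ a₂ b₁ b₂) :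
    HasRDP2Decomp mul one le b₁ b₂ a₁ a₂ := by
  obtain ⟨c₁₁, c₁₂, c₂₁, c₂₂, h₁₁, h₁₂, h₂₁, h₂₂, e₁, e₂, e₃, e₄, hinf⟩ := h
  exact ⟨c₁₁, c₂₁, c₁₂, c₂₂, h₁₁, h₂₁, h₁₂, h₂₂, e₃, e₄, e₁, e₂, fun z hz₁ hz₂ => hinf z hz₂ hz₁⟩

section PoGroup

variable {G : Type*} [Group G] [PartialOrder G] [MulLeftMono G] [MulRightMono G]

theorem exists_le_le_of_directed (hdir : ∀ x y : G, ∃ z : G, x ≤ z ∧ y ≤ z) (x y : G) :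
    ∃ s : G, s ≤ x ∧ s ≤ y := by
  obtain ⟨z, hxz, hyz⟩ := hdir x⁻¹ y⁻¹
  exact ⟨z⁻¹, inv_le'.1 hxz, inv_le'.1 hyz⟩

theorem exists_le_le_one_le_of_directed (hdir : ∀ x y : G, ∃ z : G, x ≤ z ∧ y ≤ z)
    (p : Prop) {x y : G} (hx : p → 1 ≤ x) (hy : p → 1 ≤ y) :
    ∃ s : G, s ≤ x ∧ s ≤ y ∧ (p → 1 ≤ s) := by
  by_cases hp : p
  · exact ⟨1, hx hp, hy hp, fun _ => le_rfl⟩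
  · obtain ⟨s, hsx, hsy⟩ := exists_le_le_of_directed hdir x y
    exact ⟨s, hsx, hsy, fun h => absurd h hp⟩

theorem RDP2With.exists_decomp_of_le (hG : RDP2With (fun a b : G => a * b) 1 (· ≤ ·))
    {P g Q h s t : G} (hsP : s ≤ P) (hsQ : s ≤ Q) (htg : t ≤ g) (hth : t ≤ h)
    (hPg : P * g = Q * h) :
    ∃ c₁₁ c₁₂ c₂₁ c₂₂ : G, s ≤ c₁₁ ∧ 1 ≤ c₁₂ ∧ 1 ≤ c₂₁ ∧ t ≤ c₂₂ ∧
      P = c₁₁ * c₁₂ ∧ g = c₂₁ * c₂₂ ∧ Q = c₁₁ * c₂₁ ∧ h = c₁₂ * c₂₂ ∧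
      (∀ z : G, z ≤ c₁₂ → z ≤ c₂₁ → z ≤ 1) := by
  have hshift : s⁻¹ * P * (g * t⁻¹) = s⁻¹ * Q * (h * t⁻¹) := by
    simp only [← mul_assoc]
    rw [mul_assoc s⁻¹ P g, hPg, ← mul_assoc]
  obtain ⟨c₁₁, c₁₂, c₂₁, c₂₂, h₁₁, h₁₂, h₂₁, h₂₂, e₁, e₂, e₃, e₄, hinf⟩ :=
    hG _ _ _ _ (le_inv_mul_iff_le.2 hsP) (le_mul_inv_iff_le.2 htg)
      (le_inv_mul_iff_le.2 hsQ) (le_mul_inv_iff_le.2 hth) hshift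
  beta_reduce at e₁ e₂ e₃ e₄
  refine ⟨s * c₁₁, c₁₂, c₂₁, c₂₂ * t, le_mul_of_one_le_right' h₁₁, h₁₂, h₂₁,
    le_mul_of_one_le_left' h₂₂, ?_, ?_, ?_, ?_, hinf⟩
  · rw [mul_assoc]; exact inv_mul_eq_iff_eq_mul.1 e₁
  · rw [← mul_assoc]; exact mul_inv_eq_iff_eq_mul.1 e₂
  · rw [mul_assoc]; exact inv_mul_eq_iff_eq_mul.1 e₃
  · rw [← mul_assoc]; exact mul_inv_eq_iff_eq_mul.1 e₄

end PoGroup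

def wrInv {A G : Type*} [Group A] [Group G] (p : A × (A → G)) : A × (A → G) :=
  (p.1⁻¹, fun a => (p.2 (a * p.1⁻¹))⁻¹)

section WreathGroup

variable {A G : Type*} [Group A] [Group G]

@[simp]
theorem wrMul_fst (p q : A × (A → G)) : (wrMul p q).1 = p.1 * q.1 := rfl

@[simp]
theorem wrMul_snd (p q : A × (A → G)) (a : A) : (wrMul p q).2 a = p.2 a * q.2 (a * p.1) := rfl

theorem wrMul_assoc (p q r : A × (A → G)) :
    wrMul (wrMul p q) r = wrMul p (wrMul q r) :=
  Prod.ext (mul_assoc _ _ _) (funext fun a => by simp [mul_assoc])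

theorem wrMul_wrOne (p : A × (A → G)) : wrMul p (wrOne A G) = p :=
  Prod.ext (mul_one _) (funext fun a => by simp [wrOne])

theorem wrOne_wrMul (p : A × (A → G)) : wrMul (wrOne A G) p = p :=
  Prod.ext (one_mul _) (funext fun a => by simp [wrOne])

theorem wrMul_wrInv_wrMul (p q : A × (A → G)) : wrMul p (wrMul (wrInv p) q) = q :=
  Prod.ext (mul_inv_cancel_left _ _) (funext fun a => by simp [wrInv, mul_assoc])

theorem wrInv_wrMul_wrMul (p q : A × (A → G)) : wrMul (wrInv p) (wrMul p q) = q :=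
  Prod.ext (inv_mul_cancel_left _ _) (funext fun a => by simp [wrInv, mul_assoc])

end WreathGroup

section WreathOrder

variable {A G : Type*} [PartialOrder A] [One A] [LE G] [One G] {p : A × (A → G)}

theorem one_le_fst_of_wrOne_le (hp : wrLE (wrOne A G) p) : 1 ≤ p.1 := by
  rcases hp with hlt | ⟨heq, -⟩
  exacts [hlt.le, heq.le]

theorem one_le_snd_of_wrOne_le (hp : wrLE (wrOne A G) p) (h1 : p.1 = 1) (a : A) :
    1 ≤ p.2 a := by
  rcases hp with hlt | ⟨-, hle⟩
  exacts [absurd hlt (h1 ▸ lt_irrefl _), hle a]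

theorem wrOne_le_of_one_le_fst (h1 : 1 ≤ p.1) (h2 : p.1 = 1 → ∀ a, 1 ≤ p.2 a) :
    wrLE (wrOne A G) p := by
  rcases h1.lt_or_eq with hlt | heq
  exacts [Or.inl hlt, Or.inr ⟨heq, h2 heq.symm⟩]

theorem wrLE_wrOne_of_le_of_le {w u : A → G} (hwu : ∀ a z, z ≤ w a → z ≤ u a → z ≤ 1)
    {z : A × (A → G)} (hzw : wrLE z (1, w)) (hzu : wrLE z (1, u)) : wrLE z (wrOne A G) := by
  rcases hzw with hlt | ⟨heq, hw⟩
  · exact Or.inl hlt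
  rcases hzu with hlt | ⟨-, hu⟩
  · exact Or.inl hlt
  exact Or.inr ⟨heq, fun a => hwu a _ (hw a) (hu a)⟩

end WreathOrder

section Wreath

variable {A G : Type*} [Group A] [PartialOrder A] [MulLeftMono A] [Group G] [PartialOrder G]

theorem RDP2With.of_wreath
    (hW : RDP2With (fun p q : A × (A → G) => wrMul p q) (wrOne A G) wrLE) :
    RDP2With (fun a b : G => a * b) 1 (· ≤ ·) := by
  classical
  intro a₁ a₂ b₁ b₂ ha₁ ha₂ hb₁ hb₂ heq
  have hconst {g : G} (hg : 1 ≤ g) : wrLE (wrOne A G) ((1 : A), fun _ => g) :=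
    Or.inr ⟨rfl, fun _ => hg⟩
  obtain ⟨C₁₁, C₁₂, C₂₁, C₂₂, h₁₁, h₁₂, h₂₁, h₂₂, e₁, e₂, e₃, e₄, hinf⟩ :=
    hW ((1 : A), fun _ => a₁) (1, fun _ => a₂) (1, fun _ => b₁) (1, fun _ => b₂)
      (hconst ha₁) (hconst ha₂) (hconst hb₁) (hconst hb₂) (by simp [wrMul, heq])
  have hfst {C D : A × (A → G)} (hC : wrLE (wrOne A G) C) (hD : wrLE (wrOne A G) D)
      (hCD : (1 : A) = C.1 * D.1) : C.1 = 1 ∧ D.1 = 1 := by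
    have hC1 : C.1 = 1 := le_antisymm
      (hCD ▸ le_mul_of_one_le_right' (one_le_fst_of_wrOne_le hD)) (one_le_fst_of_wrOne_le hC)
    exact ⟨hC1, by simpa [hC1] using hCD.symm⟩
  obtain ⟨f₁₁, f₁₂⟩ := hfst h₁₁ h₁₂ (congrArg Prod.fst e₁)
  obtain ⟨f₂₁, f₂₂⟩ := hfst h₂₁ h₂₂ (congrArg Prod.fst e₂)
  have hsingle {z : G} {C : A × (A → G)} (hC : wrLE (wrOne A G) C) (hC1 : C.1 = 1)
      (hz : z ≤ C.2 1) : wrLE ((1 : A), Pi.mulSingle 1 z) C := by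
    refine Or.inr ⟨hC1.symm, fun a => ?_⟩
    rcases eq_or_ne a 1 with rfl | ha
    · simpa using hz
    · simpa [ha] using one_le_snd_of_wrOne_le hC hC1 a
  refine ⟨C₁₁.2 1, C₁₂.2 1, C₂₁.2 1, C₂₂.2 1, one_le_snd_of_wrOne_le h₁₁ f₁₁ 1,
    one_le_snd_of_wrOne_le h₁₂ f₁₂ 1, one_le_snd_of_wrOne_le h₂₁ f₂₁ 1,
    one_le_snd_of_wrOne_le h₂₂ f₂₂ 1, ?_, ?_, ?_, ?_, fun z hz₁₂ hz₂₁ => ?_⟩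
  · simpa [f₁₁] using congrFun (congrArg Prod.snd e₁) 1
  · simpa [f₂₁] using congrFun (congrArg Prod.snd e₂) 1
  · simpa [f₁₁] using congrFun (congrArg Prod.snd e₃) 1
  · simpa [f₁₂] using congrFun (congrArg Prod.snd e₄) 1
  rcases hinf _ (hsingle h₁₂ f₁₂ hz₁₂) (hsingle h₂₁ f₂₁ hz₂₁) with hlt | ⟨-, hle⟩
  · exact absurd hlt (lt_irrefl 1)
  · simpa [wrOne] using hle 1

theorem hasRDP2Decomp_wr_of_fst_lt {a₁ a₂ b₁ b₂ : A × (A → G)}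
    (ha₁ : wrLE (wrOne A G) a₁) (hb₂ : wrLE (wrOne A G) b₂) (hlt : a₁.1 < b₁.1)
    (heq : wrMul a₁ a₂ = wrMul b₁ b₂) :
    HasRDP2Decomp wrMul (wrOne A G) wrLE a₁ a₂ b₁ b₂ := by
  refine ⟨a₁, wrOne A G, wrMul (wrInv a₁) b₁, b₂, ha₁, Or.inr ⟨rfl, fun _ => le_rfl⟩,
    Or.inl (lt_inv_mul_iff_lt.2 hlt), hb₂, (wrMul_wrOne a₁).symm, ?_,
    (wrMul_wrInv_wrMul a₁ b₁).symm, (wrOne_wrMul b₂).symm, fun _ hz _ => hz⟩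
  rw [wrMul_assoc, ← heq, wrInv_wrMul_wrMul]

variable [MulLeftMono G] [MulRightMono G]

theorem hasRDP2Decomp_wr_of_fst_eq (hdir : ∀ x y : G, ∃ z : G, x ≤ z ∧ y ≤ z)
    (hG : RDP2With (fun a b : G => a * b) 1 (· ≤ ·)) {n m m' : A} {P g Q h : A → G}
    (ha₁ : wrLE (wrOne A G) (n, P)) (ha₂ : wrLE (wrOne A G) (m, g))
    (hb₁ : wrLE (wrOne A G) (n, Q)) (hb₂ : wrLE (wrOne A G) (m', h))
    (heq : wrMul (n, P) (m, g) = wrMul (n, Q) (m', h)) :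
    HasRDP2Decomp wrMul (wrOne A G) wrLE (n, P) (m, g) (n, Q) (m', h) := by
  simp only [wrMul, Prod.mk.injEq, mul_right_inj, funext_iff] at heq
  obtain ⟨rfl, hcoord⟩ := heq
  choose s hsP hsQ hs using fun x => exists_le_le_one_le_of_directed hdir (n = 1)
    (fun hn₁ => one_le_snd_of_wrOne_le ha₁ hn₁ x) (fun hn₁ => one_le_snd_of_wrOne_le hb₁ hn₁ x)
  choose t htg hth ht using fun x => exists_le_le_one_le_of_directed hdir (m = 1)
    (fun hm₁ => one_le_snd_of_wrOne_le ha₂ hm₁ (x * n))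
    (fun hm₁ => one_le_snd_of_wrOne_le hb₂ hm₁ (x * n))
  have hn : 1 ≤ n := one_le_fst_of_wrOne_le ha₁
  have hm : 1 ≤ m := one_le_fst_of_wrOne_le ha₂
  choose c₁₁ c₁₂ c₂₁ c₂₂ h₁₁ h₁₂ h₂₁ h₂₂ e₁ e₂ e₃ e₄ hinf using fun x =>
    hG.exists_decomp_of_le (hsP x) (hsQ x) (htg x) (hth x) (hcoord x)
  refine ⟨(n, c₁₁), (1, fun y => c₁₂ (y * n⁻¹)), (1, fun y => c₂₁ (y * n⁻¹)),
    (m, fun y => c₂₂ (y * n⁻¹)),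
    wrOne_le_of_one_le_fst hn fun hn₁ x => (hs x hn₁).trans (h₁₁ x),
    Or.inr ⟨rfl, fun y => h₁₂ _⟩, Or.inr ⟨rfl, fun y => h₂₁ _⟩,
    wrOne_le_of_one_le_fst hm fun hm₁ y => (ht _ hm₁).trans (h₂₂ _),
    Prod.ext (mul_one n).symm (funext fun x => ?_),
    Prod.ext (one_mul m).symm (funext fun y => ?_),
    Prod.ext (mul_one n).symm (funext fun x => ?_),
    Prod.ext (one_mul m).symm (funext fun y => ?_),
    fun z => wrLE_wrOne_of_le_of_le fun y => hinf (y * n⁻¹)⟩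
  · simpa using e₁ x
  · simpa using e₂ (y * n⁻¹)
  · simpa using e₃ x
  · simpa using e₄ (y * n⁻¹)

end Wreath

theorem RDP2With.wreath {A G : Type*} [Group A] [LinearOrder A] [MulLeftMono A]
    [Group G] [PartialOrder G] [MulLeftMono G] [MulRightMono G]
    (hdir : ∀ x y : G, ∃ z : G, x ≤ z ∧ y ≤ z)
    (hG : RDP2With (fun a b : G => a * b) 1 (· ≤ ·)) :
    RDP2With (fun p q : A × (A → G) => wrMul p q) (wrOne A G) wrLE := by
  rintro ⟨n, P⟩ ⟨m, g⟩ ⟨n', Q⟩ ⟨m', h⟩ ha₁ ha₂ hb₁ hb₂ heq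
  rcases lt_trichotomy n n' with hlt | rfl | hgt
  · exact hasRDP2Decomp_wr_of_fst_lt ha₁ hb₂ hlt heq
  · exact hasRDP2Decomp_wr_of_fst_eq hdir hG ha₁ ha₂ hb₁ hb₂ heq
  · exact (hasRDP2Decomp_wr_of_fst_lt hb₁ ha₂ hgt heq.symm).symm

theorem wreath_rdp2_iff_general {A G : Type*} [Group A] [LinearOrder A]
    [CovariantClass A A (· * ·) (· ≤ ·)]
    [Group G] [PartialOrder G]
    [CovariantClass G G (· * ·) (· ≤ ·)]
    [CovariantClass G G (Function.swap (· * ·)) (· ≤ ·)]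
    (hdir : ∀ x y : G, ∃ z : G, x ≤ z ∧ y ≤ z) :
    RDP2With (fun p q : A × (A → G) => wrMul p q) (wrOne A G) wrLE ↔
      RDP2With (fun a b : G => a * b) 1 (· ≤ ·) :=
  ⟨RDP2With.of_wreath, RDP2With.wreath hdir⟩

/-- For a linearly ordered group `A` and a directed po-group `G`,
the unrestricted Wreath product `A Wr G` satisfies RDP₂ iff `G` does. -/
theorem wreath_rdp2_iff {A G : Type*} [Group A] [LinearOrder A]
    [CovariantClass A A (· * ·) (· ≤ ·)]
    [CovariantClass A A (Function.swap (· * ·)) (· ≤ ·)]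
    [Group G] [PartialOrder G]
    [CovariantClass G G (· * ·) (· ≤ ·)]
    [CovariantClass G G (Function.swap (· * ·)) (· ≤ ·)]
    (hdir : ∀ x y : G, ∃ z : G, x ≤ z ∧ y ≤ z) :
    RDP2With (fun p q : A × (A → G) => wrMul p q) (wrOne A G) wrLE ↔
      RDP2With (fun a b : G => a * b) 1 (· ≤ ·) :=
  wreath_rdp2_iff_general hdir
end

section
/- Let G be a directed po-group. The following are equivalent: (i) the right wreath product ℤ ⃗wr G satisfies RDP₂; (ii) the left wreath product ℤ ⃖wr G satisfies RDP₂; (iii) G is linearly ordered. In any such case, the right and left wreath products are linearly ordered groups. -/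
/-! Order `ℤ wr G` by the sign of the leading coefficient at the greatest (right) or least (left)
index. If `G` is linearly ordered this order is total, and a total left-invariant order has RDP₂
trivially: one of the cross entries can be taken to be `1`.

Conversely, let `t = (1, 1)` be the shift and decompose `t · (δ₁ y) t = (δ₀ y) t · t`. Any
`(0, δₖ h)` with `h ≰ 1` is not below `1`, so it must fail to lie below one of `c₁₂`, `c₂₁`. This
rules out that both have degree `1`, hence both have degree `0` and `c₂₁ = c₁₂ · δ₁ y`. It also
rules out that both have a leading entry, since `k` can be placed beyond neither of them. So
`c₁₂ = 1`, giving `1 ≤ y`, or `c₂₁ = 1`, giving `y ≤ 1`. -/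

theorem rdp2WithOn_of_total {M : Type*} [Group M] (S : Subgroup M) {le : M → M → Prop}
    (hrefl : ∀ p, le p p) (hmul : ∀ a p q, le p q → le (a * p) (a * q))
    (htotal : ∀ p ∈ S, ∀ q ∈ S, le p q ∨ le q p) :
    RDP2WithOn (S : Set M) (· * ·) 1 le := by
  have hcone : ∀ p q, le p q → le 1 (p⁻¹ * q) := fun p q h => inv_mul_cancel p ▸ hmul p⁻¹ p q h
  intro a₁ a₂ b₁ b₂ ha₁ ha₂ hb₁ hb₂ pa₁ pa₂ pb₁ pb₂ hab
  simp only at hab ⊢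
  rcases htotal a₁ ha₁ b₁ hb₁ with h | h
  · refine ⟨a₁, 1, a₁⁻¹ * b₁, b₂, ha₁, S.one_mem, S.mul_mem (S.inv_mem ha₁) hb₁, hb₂,
      pa₁, hrefl 1, hcone _ _ h, pb₂, (mul_one a₁).symm, ?_, by group, (one_mul b₂).symm,
      fun _ _ hz _ => hz⟩
    rw [mul_assoc, ← hab, inv_mul_cancel_left]
  · refine ⟨b₁, b₁⁻¹ * a₁, 1, a₂, hb₁, S.mul_mem (S.inv_mem hb₁) ha₁, S.one_mem, ha₂,
      pb₁, hcone _ _ h, hrefl 1, pa₂, by group, (one_mul a₂).symm, (mul_one b₁).symm, ?_,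
      fun _ _ _ hz => hz⟩
    rw [mul_assoc, hab, inv_mul_cancel_left]

section ZWrGroup

variable {G : Type*} [Group G]

lemma zwrMul_assoc (p q s : ℤ × (ℤ → G)) :
    zwrMul (zwrMul p q) s = zwrMul p (zwrMul q s) :=
  Prod.ext (add_assoc _ _ _) <| funext fun i => by simp [zwrMul, mul_assoc, add_assoc]

lemma zwrOne_mul (p : ℤ × (ℤ → G)) : zwrMul (zwrOne G) p = p := by
  simp [zwrMul, zwrOne]

lemma zwrMul_one (p : ℤ × (ℤ → G)) : zwrMul p (zwrOne G) = p := by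
  simp [zwrMul, zwrOne]

lemma zwrInv_mul (p : ℤ × (ℤ → G)) : zwrMul (zwrInv p) p = zwrOne G :=
  Prod.ext (neg_add_cancel _) <| funext fun i => by
    simp [zwrMul, zwrInv, zwrOne, ← sub_eq_add_neg]

end ZWrGroup

/-- A type synonym, so that `zwrMul` can be the multiplication of a `Group` instance: the
product `ℤ × (ℤ → G)` already carries the componentwise one. -/
def ZWr (G : Type*) := ℤ × (ℤ → G)

namespace ZWr

variable {G : Type*} [Group G]

instance : Group (ZWr G) where
  mul := zwrMul
  one := zwrOne G
  inv := zwrInv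
  mul_assoc := zwrMul_assoc
  one_mul := zwrOne_mul
  mul_one := zwrMul_one
  inv_mul_cancel := zwrInv_mul

@[simp] lemma fst_mul (p q : ZWr G) : (p * q).1 = p.1 + q.1 := rfl
@[simp] lemma snd_mul (p q : ZWr G) (i : ℤ) : (p * q).2 i = p.2 i * q.2 (i + p.1) := rfl
@[simp] lemma fst_one : (1 : ZWr G).1 = 0 := rfl
@[simp] lemma snd_one (i : ℤ) : (1 : ZWr G).2 i = 1 := rfl
@[simp] lemma fst_inv (p : ZWr G) : p⁻¹.1 = -p.1 := rfl
@[simp] lemma snd_inv (p : ZWr G) (i : ℤ) : p⁻¹.2 i = (p.2 (i - p.1))⁻¹ := rfl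

def finSupp (G : Type*) [Group G] : Subgroup (ZWr G) where
  carrier := zwrS G
  one_mem' := show (Function.mulSupport fun _ : ℤ => (1 : G)).Finite by simp
  mul_mem' {p q} hp hq := by
    have hq' : (Function.mulSupport fun i => q.2 (i + p.1)).Finite :=
      hq.preimage (add_left_injective p.1).injOn
    refine (hp.union hq').subset fun i hi => ?_
    by_contra h
    simp only [Set.mem_union, Function.mem_mulSupport, not_or, not_not] at h
    exact hi (by simp [h.1, h.2])
  inv_mem' {p} hp := by
    refine (hp.preimage (sub_left_injective (b := p.1)).injOn).subset fun i hi => ?_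
    simpa using hi

def single (k : ℤ) (g : G) : ZWr G := (0, Pi.mulSingle k g)

@[simp] lemma fst_single (k : ℤ) (g : G) : (single k g).1 = 0 := rfl
@[simp] lemma snd_single (k : ℤ) (g : G) : (single k g).2 = Pi.mulSingle k g := rfl

lemma single_mem (k : ℤ) (g : G) : single k g ∈ finSupp G :=
  (Set.finite_singleton k).subset Pi.mulSupport_mulSingle_subset

lemma single_inv (k : ℤ) (g : G) : (single k g)⁻¹ = single k g⁻¹ :=
  Prod.ext neg_zero <| funext fun i => by by_cases h : i = k <;> simp [h]

def shift : ZWr G := (1, 1)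

@[simp] lemma fst_shift : (shift : ZWr G).1 = 1 := rfl
@[simp] lemma snd_shift (i : ℤ) : (shift : ZWr G).2 i = 1 := rfl

lemma shift_mem : (shift : ZWr G) ∈ finSupp G :=
  show (Function.mulSupport (1 : ℤ → G)).Finite by simp

lemma shift_mul_single (k : ℤ) (g : G) : shift * single (k + 1) g = single k g * shift :=
  Prod.ext (add_comm _ _) <| funext fun i => by by_cases h : i = k <;> simp [h]

/-- `r j i` says that the index `i` lies beyond `j`: `(· < ·)` gives `rPos` and `rLE`,
`(· > ·)` gives `lPos` and `lLE`. -/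
def IsPos [LT G] (r : ℤ → ℤ → Prop) (p : ZWr G) : Prop :=
  0 < p.1 ∨ (p.1 = 0 ∧ ∃ j, 1 < p.2 j ∧ ∀ i, r j i → p.2 i = 1)

def Le [LT G] (r : ℤ → ℤ → Prop) (p q : ZWr G) : Prop :=
  p = q ∨ IsPos r (p⁻¹ * q)

variable {r : ℤ → ℤ → Prop} {p q : ZWr G}

section LT

variable [LT G]

lemma mul_le_mul_left_iff (a : ZWr G) : Le r (a * p) (a * q) ↔ Le r p q := by
  simp only [Le, mul_inv_rev, mul_assoc, inv_mul_cancel_left, mul_right_inj]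

lemma one_le_iff : Le r 1 p ↔ p = 1 ∨ IsPos r p := by
  simp only [Le, inv_one, one_mul, eq_comm]

lemma le_one_iff_one_le_inv : Le r p 1 ↔ Le r 1 p⁻¹ := by
  rw [← mul_le_mul_left_iff p⁻¹, inv_mul_cancel, mul_one]

lemma le_of_fst_lt (h : p.1 < q.1) : Le r p q :=
  Or.inr <| Or.inl <| by simp only [fst_mul, fst_inv]; omega

lemma fst_nonneg_of_one_le (h : Le r 1 p) : 0 ≤ p.1 := by
  rcases one_le_iff.1 h with rfl | h | h
  exacts [le_rfl, h.le, h.1.ge]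

lemma eq_one_or_leading (h : Le r 1 p) (h0 : p.1 = 0) :
    p = 1 ∨ ∃ m, 1 < p.2 m ∧ ∀ i, r m i → p.2 i = 1 := by
  rcases one_le_iff.1 h with h | h | ⟨-, h⟩
  exacts [Or.inl h, absurd h (by omega), Or.inr h]

lemma single_le_of_leading {k m : ℤ} (g : G) (hp : p.1 = 0) (hm : 1 < p.2 m)
    (hbeyond : ∀ i, r m i → p.2 i = 1) (hkm : k ≠ m) (hk : ¬ r m k) : Le r (single k g) p := by
  refine Or.inr <| Or.inr ⟨by simp [hp], m, by simpa [hkm.symm] using hm, fun i hi => ?_⟩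
  have hik : i ≠ k := by rintro rfl; exact hk hi
  simp [hik, hbeyond i hi]

end LT

section Preorder

variable [Preorder G]

lemma one_le_of_one_le_single {k : ℤ} {g : G} (h : Le r 1 (single k g)) : 1 ≤ g := by
  rcases one_le_iff.1 h with h | h | ⟨-, j, hj, -⟩
  · have hg : g = 1 := by simpa using congrFun (congrArg Prod.snd h) k
    rw [hg]
  · simp at h
  · by_cases hjk : j = k
    · subst hjk
      simpa using hj.le
    · simp [hjk] at hj

variable [MulLeftMono G]

lemma le_one_of_single_le_one {k : ℤ} {g : G} (h : Le r (single k g) 1) : g ≤ 1 := by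
  rw [le_one_iff_one_le_inv, single_inv] at h
  exact Left.one_le_inv_iff.1 (one_le_of_one_le_single h)

theorem one_le_or_le_one_of_rdp2WithOn
    (hfar : ∀ m n : ℤ, ∃ k, k ≠ m ∧ k ≠ n ∧ ¬ r m k ∧ ¬ r n k)
    (H : RDP2WithOn (finSupp G : Set (ZWr G)) (· * ·) 1 (Le r)) {h : G} (hh : ¬ h ≤ 1)
    (y : G) : 1 ≤ y ∨ y ≤ 1 := by
  have hconj : shift * single 1 y = single 0 y * shift := shift_mul_single 0 y
  have hpos : ∀ k, Le r 1 (single k y * shift) := fun k => le_of_fst_lt (by simp)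
  obtain ⟨c₁₁, c₁₂, c₂₁, -, -, -, -, -, p₁₁, p₁₂, p₂₁, -, e₁, -, e₃, -, hinf⟩ :=
    H shift (single 1 y * shift) (single 0 y * shift) shift shift_mem
      ((finSupp G).mul_mem (single_mem 1 y) shift_mem)
      ((finSupp G).mul_mem (single_mem 0 y) shift_mem) shift_mem
      (le_of_fst_lt (by simp)) (hpos 1) (hpos 0) (le_of_fst_lt (by simp))
      (by simp only; rw [← mul_assoc, hconj, mul_assoc])
  simp only at e₁ e₃
  have hsep : ∀ k, Le r (single k h) c₁₂ → ¬ Le r (single k h) c₂₁ := fun k h₁ h₂ =>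
    hh (le_one_of_single_le_one (hinf _ (single_mem k h) h₁ h₂))
  have f₁ : c₁₁.1 + c₁₂.1 = 1 := by simpa using (congrArg Prod.fst e₁).symm
  have f₃ : c₁₁.1 + c₂₁.1 = 1 := by simpa using (congrArg Prod.fst e₃).symm
  have n₁₁ := fst_nonneg_of_one_le p₁₁
  have n₁₂ := fst_nonneg_of_one_le p₁₂
  obtain h₁₂ | h₁₂ : c₁₂.1 = 1 ∨ c₁₂.1 = 0 := by omega
  · exact (hsep 0 (le_of_fst_lt (by simp; omega)) (le_of_fst_lt (by simp; omega))).elim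
  have h₂₁ : c₂₁.1 = 0 := by omega
  have hc : c₂₁ = c₁₂ * single 1 y :=
    calc c₂₁ = c₁₂ * ((c₁₁ * c₁₂)⁻¹ * (c₁₁ * c₂₁)) := by group
      _ = c₁₂ * single 1 y := by rw [← e₁, ← e₃, ← hconj, inv_mul_cancel_left]
  rcases eq_one_or_leading p₁₂ h₁₂ with rfl | ⟨m, hm, hm'⟩
  · rw [hc, one_mul] at p₂₁
    exact Or.inl (one_le_of_one_le_single p₂₁)
  rcases eq_one_or_leading p₂₁ h₂₁ with rfl | ⟨n, hn, hn'⟩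
  · rw [eq_inv_of_mul_eq_one_left hc.symm, single_inv] at p₁₂
    exact Or.inr (Left.one_le_inv_iff.1 (one_le_of_one_le_single p₁₂))
  obtain ⟨k, hkm, hkn, hmk, hnk⟩ := hfar m n
  exact (hsep k (single_le_of_leading h h₁₂ hm hm' hkm hmk)
    (single_le_of_leading h h₂₁ hn hn' hkn hnk)).elim

end Preorder

variable [PartialOrder G] [MulLeftMono G]

theorem le_total_of_rdp2WithOn (hfar : ∀ m n : ℤ, ∃ k, k ≠ m ∧ k ≠ n ∧ ¬ r m k ∧ ¬ r n k)
    (H : RDP2WithOn (finSupp G : Set (ZWr G)) (· * ·) 1 (Le r)) (a b : G) : a ≤ b ∨ b ≤ a := by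
  by_cases htriv : ∀ h : G, h ≤ 1
  · have h1 : ∀ g : G, g = 1 := fun g =>
      le_antisymm (htriv g) (Left.inv_le_one_iff.1 (htriv g⁻¹))
    exact Or.inl (by rw [h1 a, h1 b])
  obtain ⟨h, hh⟩ := not_forall.1 htriv
  exact (one_le_or_le_one_of_rdp2WithOn hfar H hh (a⁻¹ * b)).imp le_inv_mul_iff_le.1
    inv_mul_le_one_iff.1

theorem eq_one_or_isPos_or_isPos_inv
    (hmax : ∀ T : Finset ℤ, T.Nonempty → ∃ j ∈ T, ∀ i ∈ T, ¬ r j i)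
    (hlin : ∀ a b : G, a ≤ b ∨ b ≤ a) (hp : p ∈ finSupp G) :
    p = 1 ∨ IsPos r p ∨ IsPos r p⁻¹ := by
  have hfin : (Function.mulSupport p.2).Finite := hp
  rcases lt_trichotomy p.1 0 with h0 | h0 | h0
  · exact Or.inr <| Or.inr <| Or.inl <| by simp; omega
  swap
  · exact Or.inr <| Or.inl <| Or.inl h0
  rcases hfin.toFinset.eq_empty_or_nonempty with hempty | hne
  · refine Or.inl <| Prod.ext h0 <| funext fun i => ?_
    simpa using Finset.eq_empty_iff_forall_notMem.1 hempty i
  obtain ⟨j, hj, hjmax⟩ := hmax _ hne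
  rw [Set.Finite.mem_toFinset, Function.mem_mulSupport] at hj
  have hbeyond : ∀ i, r j i → p.2 i = 1 := fun i hi => by
    by_contra hne
    exact hjmax i (by simpa using hne) hi
  rcases hlin 1 (p.2 j) with hle | hle
  · exact Or.inr <| Or.inl <| Or.inr ⟨h0, j, lt_of_le_of_ne hle (Ne.symm hj), hbeyond⟩
  · refine Or.inr <| Or.inr <| Or.inr ⟨by simp [h0], j, ?_, fun i hi => by simp [h0, hbeyond i hi]⟩
    simpa [h0] using Left.one_lt_inv_iff.2 (lt_of_le_of_ne hle hj)

theorem Le.total (hmax : ∀ T : Finset ℤ, T.Nonempty → ∃ j ∈ T, ∀ i ∈ T, ¬ r j i)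
    (hlin : ∀ a b : G, a ≤ b ∨ b ≤ a) :
    ∀ p ∈ finSupp G, ∀ q ∈ finSupp G, Le r p q ∨ Le r q p := by
  intro p hp q hq
  rcases eq_one_or_isPos_or_isPos_inv hmax hlin ((finSupp G).mul_mem ((finSupp G).inv_mem hp) hq)
    with h | h | h
  · exact Or.inl <| Or.inl <| inv_mul_eq_one.1 h
  · exact Or.inl <| Or.inr h
  · exact Or.inr <| Or.inr <| by rwa [mul_inv_rev, inv_inv] at h

theorem rdp2WithOn_of_le_total (hmax : ∀ T : Finset ℤ, T.Nonempty → ∃ j ∈ T, ∀ i ∈ T, ¬ r j i)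
    (hlin : ∀ a b : G, a ≤ b ∨ b ≤ a) :
    RDP2WithOn (finSupp G : Set (ZWr G)) (· * ·) 1 (Le r) :=
  rdp2WithOn_of_total (finSupp G) (fun _ => Or.inl rfl) (fun a _ _ => (mul_le_mul_left_iff a).2)
    (Le.total hmax hlin)

end ZWr

theorem zwr_rdp2_iff_linearOrdered_general {G : Type*} [Group G] [PartialOrder G]
    [CovariantClass G G (· * ·) (· ≤ ·)] :
    (RDP2WithOn (zwrS G) (fun p q : ℤ × (ℤ → G) => zwrMul p q) (zwrOne G) rLE ↔
      ∀ a b : G, a ≤ b ∨ b ≤ a) ∧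
    (RDP2WithOn (zwrS G) (fun p q : ℤ × (ℤ → G) => zwrMul p q) (zwrOne G) lLE ↔
      ∀ a b : G, a ≤ b ∨ b ≤ a) ∧
    ((∀ a b : G, a ≤ b ∨ b ≤ a) →
      (∀ p ∈ zwrS G, ∀ q ∈ zwrS G, rLE p q ∨ rLE q p) ∧
      (∀ p ∈ zwrS G, ∀ q ∈ zwrS G, lLE p q ∨ lLE q p)) := by
  have hmax : ∀ T : Finset ℤ, T.Nonempty → ∃ j ∈ T, ∀ i ∈ T, ¬ j < i :=
    fun T hT => ⟨T.max' hT, T.max'_mem hT, fun i hi => (T.le_max' i hi).not_gt⟩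
  have hmin : ∀ T : Finset ℤ, T.Nonempty → ∃ j ∈ T, ∀ i ∈ T, ¬ j > i :=
    fun T hT => ⟨T.min' hT, T.min'_mem hT, fun i hi => (T.min'_le i hi).not_gt⟩
  have hbelow : ∀ m n : ℤ, ∃ k, k ≠ m ∧ k ≠ n ∧ ¬ m < k ∧ ¬ n < k :=
    fun m n => ⟨min m n - 1, by omega, by omega, by omega, by omega⟩
  have habove : ∀ m n : ℤ, ∃ k, k ≠ m ∧ k ≠ n ∧ ¬ m > k ∧ ¬ n > k :=
    fun m n => ⟨max m n + 1, by omega, by omega, by omega, by omega⟩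
  exact ⟨⟨ZWr.le_total_of_rdp2WithOn (G := G) hbelow, ZWr.rdp2WithOn_of_le_total hmax⟩,
    ⟨ZWr.le_total_of_rdp2WithOn (G := G) habove, ZWr.rdp2WithOn_of_le_total hmin⟩,
    fun hlin => ⟨ZWr.Le.total hmax hlin, ZWr.Le.total hmin hlin⟩⟩

/-- For a directed po-group `G`, the right wreath product
`ℤ →wr G` satisfies RDP₂ iff the left wreath product `ℤ ←wr G` satisfies RDP₂
iff `G` is linearly ordered; and in any such case both wreath products are
linearly ordered groups. -/
theorem zwr_rdp2_iff_linearOrdered {G : Type*} [Group G] [PartialOrder G]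
    [CovariantClass G G (· * ·) (· ≤ ·)]
    [CovariantClass G G (Function.swap (· * ·)) (· ≤ ·)]
    (hdir : ∀ x y : G, ∃ z : G, x ≤ z ∧ y ≤ z) :
    (RDP2WithOn (zwrS G) (fun p q : ℤ × (ℤ → G) => zwrMul p q) (zwrOne G) rLE ↔
      ∀ a b : G, a ≤ b ∨ b ≤ a) ∧
    (RDP2WithOn (zwrS G) (fun p q : ℤ × (ℤ → G) => zwrMul p q) (zwrOne G) lLE ↔
      ∀ a b : G, a ≤ b ∨ b ≤ a) ∧
    ((∀ a b : G, a ≤ b ∨ b ≤ a) →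
      (∀ p ∈ zwrS G, ∀ q ∈ zwrS G, rLE p q ∨ rLE q p) ∧
      (∀ p ∈ zwrS G, ∀ q ∈ zwrS G, lLE p q ∨ lLE q p)) :=
  zwr_rdp2_iff_linearOrdered_general
end

section
/- Let G be a directed po-group. If the right wreath product ℤ ⃗wr G (respectively the left wreath product ℤ ⃖wr G) satisfies RDP₁, then G satisfies RDP₁. -/
/-! Embed `G` into the wreath product at index `0`. A decomposition of embedded elements into
positive factors has all shifts `0`, since the shifts are nonnegative and add up to `0`. Beyond
index `0` (in the direction that decides positivity) the factors of a positive decomposition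
must vanish: otherwise the farthest nonzero entry of the two factors would give a nonzero entry
of the product. So the entries at index `0` are positive and give the decomposition in `G`.
For commutativity, an `x` between `1` and the entry of `c₁₂` at `0` lifts to the element
obtained from `c₁₂` by replacing that entry by `x`, which lies between `1` and `c₁₂`. -/

/-- `ε * j < ε * i` says that `i` lies beyond `j` in the direction that decides positivity. -/
def zwrPos {G : Type*} [One G] [LT G] (ε : ℤ) (p : ℤ × (ℤ → G)) : Prop :=
  0 < p.1 ∨ (p.1 = 0 ∧ ∃ j : ℤ, 1 < p.2 j ∧ ∀ i : ℤ, ε * j < ε * i → p.2 i = 1)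

def zwrLE {G : Type*} [Group G] [LT G] (ε : ℤ) (p q : ℤ × (ℤ → G)) : Prop :=
  p = q ∨ zwrPos ε (zwrMul (zwrInv p) q)

section

variable {G : Type*} [Group G]

theorem rLE_eq_zwrLE [LT G] : (rLE : ℤ × (ℤ → G) → ℤ × (ℤ → G) → Prop) = zwrLE 1 := by
  funext p q
  simp only [rLE, zwrLE, rPos, zwrPos, one_mul]

theorem lLE_eq_zwrLE [LT G] : (lLE : ℤ × (ℤ → G) → ℤ × (ℤ → G) → Prop) = zwrLE (-1) := by
  funext p q
  simp only [lLE, zwrLE, lPos, zwrPos, neg_mul, one_mul, neg_lt_neg_iff]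

theorem zwrMul_zero_left (f : ℤ → G) (q : ℤ × (ℤ → G)) : zwrMul (0, f) q = (q.1, f * q.2) := by
  simp [zwrMul, Pi.mul_def]

theorem zwrMul_snd_apply_of_fst_eq_zero {p : ℤ × (ℤ → G)} (hp : p.1 = 0) (q : ℤ × (ℤ → G))
    (i : ℤ) : (zwrMul p q).2 i = p.2 i * q.2 i := by
  simp [zwrMul, hp]

theorem zwrInv_zero (f : ℤ → G) : zwrInv (0, f) = (0, f⁻¹) := by
  simp [zwrInv, Pi.inv_def]

theorem zwrInv_zwrOne : zwrInv (zwrOne G) = zwrOne G := by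
  simp [zwrOne, zwrInv_zero, Pi.inv_def]

theorem zwrOne_zwrMul (q : ℤ × (ℤ → G)) : zwrMul (zwrOne G) q = q := by
  simp [zwrOne, zwrMul]

theorem mulSingle_mem_zwrS (k : ℤ) (a : G) : ((0 : ℤ), Pi.mulSingle k a) ∈ zwrS G :=
  (Set.finite_singleton k).subset Pi.mulSupport_mulSingle_subset

theorem update_mem_zwrS {p : ℤ × (ℤ → G)} (hp : p ∈ zwrS G) (k : ℤ) {x : G} (hx : x ≠ 1) :
    ((0 : ℤ), Function.update p.2 k x) ∈ zwrS G := by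
  simpa [zwrS, Function.mulSupport_update_of_ne_one _ _ hx] using hp

variable [PartialOrder G] {ε : ℤ}

theorem one_zwrLE_iff {p : ℤ × (ℤ → G)} : zwrLE ε (zwrOne G) p ↔ zwrOne G = p ∨ zwrPos ε p := by
  rw [zwrLE, zwrInv_zwrOne, zwrOne_zwrMul]

theorem fst_nonneg_of_one_zwrLE {p : ℤ × (ℤ → G)} (hp : zwrLE ε (zwrOne G) p) : 0 ≤ p.1 := by
  rcases one_zwrLE_iff.1 hp with rfl | hp | hp
  exacts [le_rfl, hp.le, hp.1.ge]

theorem one_zwrLE_zero_iff {f : ℤ → G} :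
    zwrLE ε (zwrOne G) (0, f) ↔ f = 1 ∨ ∃ j, 1 < f j ∧ ∀ i, ε * j < ε * i → f i = 1 := by
  rw [one_zwrLE_iff]
  simp [zwrPos, zwrOne, eq_comm, funext_iff]

theorem zwrPos_mulSingle (k : ℤ) {a : G} (ha : 1 < a) : zwrPos ε ((0 : ℤ), Pi.mulSingle k a) := by
  refine Or.inr ⟨rfl, k, by simpa using ha, fun i hi => ?_⟩
  show (Pi.mulSingle k a : ℤ → G) i = 1
  exact Pi.mulSingle_eq_of_ne (M := fun _ => G) (by rintro rfl; exact hi.false) a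

theorem one_zwrLE_mulSingle (k : ℤ) {a : G} (ha : 1 ≤ a) :
    zwrLE ε (zwrOne G) ((0 : ℤ), Pi.mulSingle k a) := by
  rcases ha.eq_or_lt with rfl | ha
  · left
    simp [zwrOne, Pi.one_def]
  · exact one_zwrLE_iff.2 (Or.inr (zwrPos_mulSingle k ha))

theorem one_le_apply_of_eq_one_beyond (hε : ε ≠ 0) {f : ℤ → G} {k : ℤ}
    (hf : zwrLE ε (zwrOne G) (0, f)) (hbeyond : ∀ i, ε * k < ε * i → f i = 1) : 1 ≤ f k := by
  rcases one_zwrLE_zero_iff.1 hf with rfl | ⟨j, hj, hf⟩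
  · exact le_rfl
  rcases lt_trichotomy (ε * j) (ε * k) with h | h | h
  · exact (hf k h).ge
  · obtain rfl : j = k := mul_left_cancel₀ hε h
    exact hj.le
  · exact absurd (hbeyond j h) hj.ne'

theorem one_zwrLE_update {f : ℤ → G} {k : ℤ} (hbeyond : ∀ i, ε * k < ε * i → f i = 1)
    {x : G} (hx : 1 < x) : zwrLE ε (zwrOne G) (0, Function.update f k x) := by
  refine one_zwrLE_iff.2 (Or.inr (Or.inr ⟨rfl, k, by simpa using hx, fun i hi => ?_⟩))
  dsimp only
  rw [Function.update_of_ne (by rintro rfl; exact hi.false)]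
  exact hbeyond i hi

variable [MulLeftMono G]

theorem eq_one_beyond_of_mul_eq_one_beyond (hε : ε ≠ 0) {f g : ℤ → G} {k : ℤ}
    (hf : zwrLE ε (zwrOne G) (0, f)) (hg : zwrLE ε (zwrOne G) (0, g))
    (hfg : ∀ i, ε * k < ε * i → f i * g i = 1) (i : ℤ) (hi : ε * k < ε * i) :
    f i = 1 ∧ g i = 1 := by
  suffices hfi : f i = 1 by
    refine ⟨hfi, ?_⟩
    simpa [hfi] using hfg i hi
  by_contra hfi
  have hgi : g i ≠ 1 := fun h => hfi (by simpa [h] using hfg i hi)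
  obtain ⟨j₁, hj₁, hf⟩ := (one_zwrLE_zero_iff.1 hf).resolve_left (fun h => hfi (by simp [h]))
  obtain ⟨j₂, hj₂, hg⟩ := (one_zwrLE_zero_iff.1 hg).resolve_left (fun h => hgi (by simp [h]))
  have hij₁ : ε * i ≤ ε * j₁ := not_lt.1 fun h => hfi (hf i h)
  have hij₂ : ε * i ≤ ε * j₂ := not_lt.1 fun h => hgi (hg i h)
  rcases lt_trichotomy (ε * j₁) (ε * j₂) with h | h | h
  · have := hfg j₂ (hi.trans_le hij₂)
    rw [hf j₂ h, one_mul] at this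
    exact hj₂.ne' this
  · obtain rfl : j₁ = j₂ := mul_left_cancel₀ hε h
    exact (hj₁.trans_le (le_mul_of_one_le_right' hj₂.le)).ne' (hfg j₁ (hi.trans_le hij₁))
  · have := hfg j₁ (hi.trans_le hij₁)
    rw [hg j₁ h, mul_one] at this
    exact hj₁.ne' this

theorem positive_factors_of_zwrMul_eq_mulSingle (hε : ε ≠ 0) {p q : ℤ × (ℤ → G)} {k : ℤ} {a : G}
    (hp : zwrLE ε (zwrOne G) p) (hq : zwrLE ε (zwrOne G) q)
    (h : zwrMul p q = (0, Pi.mulSingle k a)) :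
    p.1 = 0 ∧ q.1 = 0 ∧ (∀ i, ε * k < ε * i → p.2 i = 1 ∧ q.2 i = 1) ∧ 1 ≤ p.2 k ∧ 1 ≤ q.2 k := by
  obtain ⟨p₁, f⟩ := p
  obtain ⟨q₁, g⟩ := q
  have hsum : p₁ + q₁ = 0 := congr_arg Prod.fst h
  have hp₁ := fst_nonneg_of_one_zwrLE hp
  have hq₁ := fst_nonneg_of_one_zwrLE hq
  obtain ⟨rfl, rfl⟩ : p₁ = 0 ∧ q₁ = 0 := by dsimp only at hp₁ hq₁; omega
  rw [zwrMul_zero_left, Prod.mk.injEq] at h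
  have hfg : ∀ i, ε * k < ε * i → f i * g i = 1 := fun i hi => by
    have : f i * g i = (Pi.mulSingle k a : ℤ → G) i := congr_fun h.2 i
    rwa [Pi.mulSingle_eq_of_ne (M := fun _ => G) (by rintro rfl; exact hi.false)] at this
  have hbeyond := eq_one_beyond_of_mul_eq_one_beyond hε hp hq hfg
  exact ⟨rfl, rfl, hbeyond, one_le_apply_of_eq_one_beyond hε hp fun i hi => (hbeyond i hi).1,
    one_le_apply_of_eq_one_beyond hε hq fun i hi => (hbeyond i hi).2⟩

theorem update_zwrLE {p : ℤ × (ℤ → G)} (hp : p.1 = 0) (k : ℤ) {x : G} (hx : x ≤ p.2 k) :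
    zwrLE ε (0, Function.update p.2 k x) p := by
  obtain ⟨p₁, f⟩ := p
  dsimp only at hp hx ⊢
  subst hp
  rcases hx.eq_or_lt with rfl | hx
  · left
    simp
  · right
    have hquot : (Function.update f k x)⁻¹ * f = Pi.mulSingle k (x⁻¹ * f k) := by
      ext i
      rcases eq_or_ne i k with rfl | hi
      · simp
      · simp [Function.update_of_ne hi, Pi.mulSingle_eq_of_ne hi]
    rw [zwrInv_zero, zwrMul_zero_left, hquot]
    exact zwrPos_mulSingle k (lt_inv_mul_iff_lt.2 hx)

theorem rdp1_of_zwrLE_rdp1 (hε : ε ≠ 0)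
    (H : RDP1WithOn (zwrS G) (fun p q : ℤ × (ℤ → G) => zwrMul p q) (zwrOne G) (zwrLE ε)) :
    RDP1With (fun a b : G => a * b) 1 (· ≤ ·) := by
  intro a₁ a₂ b₁ b₂ ha₁ ha₂ hb₁ hb₂ hab
  have hemb : zwrMul ((0 : ℤ), Pi.mulSingle 0 a₁) (0, Pi.mulSingle 0 a₂) =
      zwrMul (0, Pi.mulSingle 0 b₁) (0, Pi.mulSingle 0 b₂) := by
    simp only [zwrMul_zero_left, ← Pi.mulSingle_mul, hab]
  obtain ⟨c₁₁, c₁₂, c₂₁, c₂₂, -, hc₁₂, hc₂₁, -, p₁₁, p₁₂, p₂₁, p₂₂, e₁, e₂, e₃, e₄, hcomm⟩ :=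
    H _ _ _ _ (mulSingle_mem_zwrS 0 a₁) (mulSingle_mem_zwrS 0 a₂) (mulSingle_mem_zwrS 0 b₁)
      (mulSingle_mem_zwrS 0 b₂) (one_zwrLE_mulSingle 0 ha₁) (one_zwrLE_mulSingle 0 ha₂)
      (one_zwrLE_mulSingle 0 hb₁) (one_zwrLE_mulSingle 0 hb₂) hemb
  obtain ⟨h₁₁, h₁₂, v₁, q₁₁, q₁₂⟩ := positive_factors_of_zwrMul_eq_mulSingle hε p₁₁ p₁₂ e₁.symm
  obtain ⟨h₂₁, -, v₂, q₂₁, q₂₂⟩ := positive_factors_of_zwrMul_eq_mulSingle hε p₂₁ p₂₂ e₂.symm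
  have entry : ∀ {p q : ℤ × (ℤ → G)} {a : G}, p.1 = 0 → (0, Pi.mulSingle 0 a) = zwrMul p q →
      a = p.2 0 * q.2 0 := fun hp h => by
    simpa [zwrMul_snd_apply_of_fst_eq_zero hp] using congr_fun (congr_arg Prod.snd h) 0
  refine ⟨_, _, _, _, q₁₁, q₁₂, q₂₁, q₂₂, entry h₁₁ e₁, entry h₂₁ e₂, entry h₁₁ e₃, entry h₁₂ e₄,
    fun x y hx hxc hy hyc => ?_⟩
  rcases hx.eq_or_lt with rfl | hx
  · simp
  rcases hy.eq_or_lt with rfl | hy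
  · simp
  have hXY := hcomm _ _ (update_mem_zwrS hc₁₂ 0 hx.ne') (update_mem_zwrS hc₂₁ 0 hy.ne')
    (one_zwrLE_update (fun i hi => (v₁ i hi).2) hx) (update_zwrLE h₁₂ 0 hxc)
    (one_zwrLE_update (fun i hi => (v₂ i hi).1) hy) (update_zwrLE h₂₁ 0 hyc)
  simpa [zwrMul_zero_left] using congr_fun (congr_arg Prod.snd hXY) 0

end

theorem rdp1_of_zwr_rdp1_general {G : Type*} [Group G] [PartialOrder G]
    [CovariantClass G G (· * ·) (· ≤ ·)] :
    (RDP1WithOn (zwrS G) (fun p q : ℤ × (ℤ → G) => zwrMul p q) (zwrOne G) rLE →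
      RDP1With (fun a b : G => a * b) 1 (· ≤ ·)) ∧
    (RDP1WithOn (zwrS G) (fun p q : ℤ × (ℤ → G) => zwrMul p q) (zwrOne G) lLE →
      RDP1With (fun a b : G => a * b) 1 (· ≤ ·)) :=
  ⟨fun H => rdp1_of_zwrLE_rdp1 one_ne_zero (rLE_eq_zwrLE (G := G) ▸ H),
    fun H => rdp1_of_zwrLE_rdp1 (neg_ne_zero.2 one_ne_zero) (lLE_eq_zwrLE (G := G) ▸ H)⟩

/-- For a directed po-group `G`, if the right wreath product
`ℤ →wr G` (resp. the left wreath product `ℤ ←wr G`) satisfies RDP₁, then so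
does `G`. -/
theorem rdp1_of_zwr_rdp1 {G : Type*} [Group G] [PartialOrder G]
    [CovariantClass G G (· * ·) (· ≤ ·)]
    [CovariantClass G G (Function.swap (· * ·)) (· ≤ ·)]
    (hdir : ∀ x y : G, ∃ z : G, x ≤ z ∧ y ≤ z) :
    (RDP1WithOn (zwrS G) (fun p q : ℤ × (ℤ → G) => zwrMul p q) (zwrOne G) rLE →
      RDP1With (fun a b : G => a * b) 1 (· ≤ ·)) ∧
    (RDP1WithOn (zwrS G) (fun p q : ℤ × (ℤ → G) => zwrMul p q) (zwrOne G) lLE →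
      RDP1With (fun a b : G => a * b) 1 (· ≤ ·)) :=
  rdp1_of_zwr_rdp1_general
end

section
/- Let G be a directed po-group. The following are equivalent: (i) G satisfies the Riesz interpolation property (RIP); (ii) the right wreath product ℤ ⃗wr G satisfies RIP; (iii) the left wreath product ℤ ⃖wr G satisfies RIP. -/
set_option linter.unusedSectionVars false
set_option maxHeartbeats 4000000

section Core
open Function

variable {G : Type*} [Group G] [PartialOrder G]
  [CovariantClass G G (· * ·) (· ≤ ·)]
  [CovariantClass G G (Function.swap (· * ·)) (· ≤ ·)]

lemma one_lt_invmul {a b : G} : 1 < a⁻¹ * b ↔ a < b := by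
  constructor
  · intro h
    have h1 : a * 1 ≤ a * (a⁻¹ * b) := mul_le_mul_right h.le a
    rw [mul_one, mul_inv_cancel_left] at h1
    refine lt_of_le_of_ne h1 ?_
    rintro rfl
    simp at h
  · intro h
    have h1 : a⁻¹ * a ≤ a⁻¹ * b := mul_le_mul_right h.le a⁻¹
    rw [inv_mul_cancel] at h1
    refine lt_of_le_of_ne h1 ?_
    intro he
    have : a = b := inv_mul_eq_one.1 he.symm
    exact absurd this h.ne

/-- Facts needed about an abstract strict linear order on `ℤ`. -/
structure LtOk (lt : ℤ → ℤ → Prop) : Prop where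
  tri : ∀ a b, lt a b ∨ a = b ∨ lt b a
  irr : ∀ a, ¬ lt a a
  tr : ∀ {a b c}, lt a b → lt b c → lt a c
  max : ∀ t : Finset ℤ, t.Nonempty → ∃ J ∈ t, ∀ i ∈ t, i ≠ J → lt i J

lemma LtOk.asym {lt : ℤ → ℤ → Prop} (h : LtOk lt) {a b : ℤ}
    (hab : lt a b) (hba : lt b a) : False := h.irr a (h.tr hab hba)

lemma ltOk_lt : LtOk ((· < ·) : ℤ → ℤ → Prop) := by
  refine ⟨fun a b => by omega, fun a => by omega, fun h h' => by omega, fun t ht => ?_⟩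
  exact ⟨t.max' ht, t.max'_mem ht, fun i hi hne => lt_of_le_of_ne (t.le_max' i hi) hne⟩

lemma ltOk_gt : LtOk (fun a b : ℤ => b < a) := by
  refine ⟨fun a b => by omega, fun a => by omega, fun h h' => by omega, fun t ht => ?_⟩
  exact ⟨t.min' ht, t.min'_mem ht, fun i hi hne => lt_of_le_of_ne (t.min'_le i hi) (Ne.symm hne)⟩

/-- Lex-type order (with respect to abstract order `lt` on indices) on functions `ℤ → G`. -/
def flexR (lt : ℤ → ℤ → Prop) (f h : ℤ → G) : Prop :=
  f = h ∨ ∃ j, f j < h j ∧ ∀ i, lt j i → f i = h i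

lemma flexR_refl (lt : ℤ → ℤ → Prop) (f : ℤ → G) : flexR lt f f := Or.inl rfl

/-- Upper bounds in the lex order (directedness), preserving agreement points. -/
lemma flex_ub {lt : ℤ → ℤ → Prop} (hlt : LtOk lt)
    (hdir : ∀ x y : G, ∃ z : G, x ≤ z ∧ y ≤ z)
    (s : Finset ℤ) (f₁ f₂ : ℤ → G) (hs : ∀ i, i ∉ s → f₁ i = f₂ i) :
    ∃ g : ℤ → G, flexR lt f₁ g ∧ flexR lt f₂ g ∧ ∀ i, f₁ i = f₂ i → g i = f₁ i := by
  classical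
  set t := s.filter (fun i => f₁ i ≠ f₂ i) with ht
  rcases t.eq_empty_or_nonempty with he | hne
  · have hf : f₁ = f₂ := funext fun i => by
      by_cases h : i ∈ s
      · by_contra hne'
        have : i ∈ t := Finset.mem_filter.2 ⟨h, hne'⟩
        simp [he] at this
      · exact hs i h
    exact ⟨f₁, Or.inl rfl, Or.inl hf.symm, fun i _ => rfl⟩
  · obtain ⟨J, hJt, hJmax⟩ := hlt.max t hne
    have hJd : f₁ J ≠ f₂ J := (Finset.mem_filter.1 hJt).2
    have hmem : ∀ i, f₁ i ≠ f₂ i → i ∈ t := fun i hi =>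
      Finset.mem_filter.2 ⟨by by_contra h; exact hi (hs i h), hi⟩
    have habove : ∀ i, lt J i → f₁ i = f₂ i := fun i hi => by
      by_contra h
      rcases eq_or_ne i J with rfl | hne'
      · exact hlt.irr _ hi
      · exact hlt.asym hi (hJmax i (hmem i h) hne')
    obtain ⟨u, hu1, hu2⟩ := hdir (f₁ J) (f₂ J)
    by_cases e1 : u = f₁ J
    · exact ⟨f₁, Or.inl rfl,
        Or.inr ⟨J, lt_of_le_of_ne (e1 ▸ hu2) fun h => hJd h.symm,
          fun i hi => (habove i hi).symm⟩, fun i _ => rfl⟩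
    by_cases e2 : u = f₂ J
    · exact ⟨f₂, Or.inr ⟨J, lt_of_le_of_ne (e2 ▸ hu1) hJd, habove⟩, Or.inl rfl,
        fun i hi => hi.symm⟩
    · refine ⟨fun i => if i = J then u else f₁ i,
        Or.inr ⟨J, ?_, fun i hi => ?_⟩, Or.inr ⟨J, ?_, fun i hi => ?_⟩, fun i hi => ?_⟩
      · simp only [if_pos rfl]
        exact lt_of_le_of_ne hu1 (Ne.symm e1)
      · have : i ≠ J := fun h => hlt.irr _ (h ▸ hi)
        simp only [if_neg this]
      · simp only [if_pos rfl]
        exact lt_of_le_of_ne hu2 (Ne.symm e2)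
      · have : i ≠ J := fun h => hlt.irr _ (h ▸ hi)
        simp only [if_neg this]
        exact (habove i hi).symm
      · have : i ≠ J := fun h => hJd (h ▸ hi)
        simp only [if_neg this]

/-- Lower bounds in the lex order, preserving agreement points. -/
lemma flex_lb {lt : ℤ → ℤ → Prop} (hlt : LtOk lt)
    (hdir : ∀ x y : G, ∃ z : G, x ≤ z ∧ y ≤ z)
    (s : Finset ℤ) (h₁ h₂ : ℤ → G) (hs : ∀ i, i ∉ s → h₁ i = h₂ i) :
    ∃ g : ℤ → G, flexR lt g h₁ ∧ flexR lt g h₂ ∧ ∀ i, h₁ i = h₂ i → g i = h₁ i := by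
  classical
  have hdir' : ∀ x y : G, ∃ z : G, z ≤ x ∧ z ≤ y := by
    intro x y
    obtain ⟨w, hw1, hw2⟩ := hdir x⁻¹ y⁻¹
    exact ⟨w⁻¹, by simpa using inv_le_inv_iff.2 hw1, by simpa using inv_le_inv_iff.2 hw2⟩
  set t := s.filter (fun i => h₁ i ≠ h₂ i) with ht
  rcases t.eq_empty_or_nonempty with he | hne
  · have hf : h₁ = h₂ := funext fun i => by
      by_cases h : i ∈ s
      · by_contra hne'
        have : i ∈ t := Finset.mem_filter.2 ⟨h, hne'⟩
        simp [he] at this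
      · exact hs i h
    exact ⟨h₁, Or.inl rfl, Or.inl hf, fun i _ => rfl⟩
  · obtain ⟨J, hJt, hJmax⟩ := hlt.max t hne
    have hJd : h₁ J ≠ h₂ J := (Finset.mem_filter.1 hJt).2
    have hmem : ∀ i, h₁ i ≠ h₂ i → i ∈ t := fun i hi =>
      Finset.mem_filter.2 ⟨by by_contra h; exact hi (hs i h), hi⟩
    have habove : ∀ i, lt J i → h₁ i = h₂ i := fun i hi => by
      by_contra h
      rcases eq_or_ne i J with rfl | hne'
      · exact hlt.irr _ hi
      · exact hlt.asym hi (hJmax i (hmem i h) hne')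
    obtain ⟨u, hu1, hu2⟩ := hdir' (h₁ J) (h₂ J)
    by_cases e1 : u = h₁ J
    · exact ⟨h₁, Or.inl rfl,
        Or.inr ⟨J, lt_of_le_of_ne (e1 ▸ hu2) hJd, habove⟩, fun i _ => rfl⟩
    by_cases e2 : u = h₂ J
    · exact ⟨h₂, Or.inr ⟨J, lt_of_le_of_ne (e2 ▸ hu1) fun h => hJd h.symm,
        fun i hi => (habove i hi).symm⟩, Or.inl rfl, fun i hi => hi.symm⟩
    · refine ⟨fun i => if i = J then u else h₁ i,
        Or.inr ⟨J, ?_, fun i hi => ?_⟩, Or.inr ⟨J, ?_, fun i hi => ?_⟩, fun i hi => ?_⟩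
      · simp only [if_pos rfl]
        exact lt_of_le_of_ne hu1 e1
      · have : i ≠ J := fun h => hlt.irr _ (h ▸ hi)
        simp only [if_neg this]
      · simp only [if_pos rfl]
        exact lt_of_le_of_ne hu2 e2
      · have : i ≠ J := fun h => hlt.irr _ (h ▸ hi)
        simp only [if_neg this]
        exact habove i hi
      · have : i ≠ J := fun h => hJd (h ▸ hi)
        simp only [if_neg this]



/-- RIP for the lex order on functions `ℤ → G`, by induction on the number of
disagreement points. -/
lemma flex_rip {lt : ℤ → ℤ → Prop} (hlt : LtOk lt)
    (hG : RIPWith ((· ≤ ·) : G → G → Prop))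
    (hdir : ∀ x y : G, ∃ z : G, x ≤ z ∧ y ≤ z) :
    ∀ (n : ℕ) (s : Finset ℤ), s.card ≤ n → ∀ f₁ f₂ h₁ h₂ : ℤ → G,
      (∀ i, i ∉ s → f₁ i = f₂ i ∧ f₁ i = h₁ i ∧ f₁ i = h₂ i) →
      flexR lt f₁ h₁ → flexR lt f₁ h₂ → flexR lt f₂ h₁ → flexR lt f₂ h₂ →
      ∃ c : ℤ → G, flexR lt f₁ c ∧ flexR lt f₂ c ∧ flexR lt c h₁ ∧ flexR lt c h₂ ∧
        ∀ i, f₁ i = f₂ i → f₁ i = h₁ i → f₁ i = h₂ i → c i = f₁ i := by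
  classical
  intro n
  induction n with
  | zero =>
    intro s hs f₁ f₂ h₁ h₂ hag _ _ _ _
    have hall : ∀ i, f₁ i = f₂ i ∧ f₁ i = h₁ i ∧ f₁ i = h₂ i := fun i =>
      hag i (by simp [Finset.card_eq_zero.1 (Nat.le_zero.1 hs)])
    exact ⟨f₁, Or.inl rfl, Or.inl (funext fun i => ((hall i).1).symm),
      Or.inl (funext fun i => (hall i).2.1), Or.inl (funext fun i => (hall i).2.2),
      fun i _ _ _ => rfl⟩
  | succ n ih =>
    intro s hs f₁ f₂ h₁ h₂ hag hf11 hf12 hf21 hf22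
    set t := s.filter (fun i => ¬(f₁ i = f₂ i ∧ f₁ i = h₁ i ∧ f₁ i = h₂ i)) with htdef
    have hagt : ∀ i, i ∉ t → f₁ i = f₂ i ∧ f₁ i = h₁ i ∧ f₁ i = h₂ i := by
      intro i hi
      by_cases h : i ∈ s
      · by_contra hc
        exact hi (Finset.mem_filter.2 ⟨h, hc⟩)
      · exact hag i h
    rcases t.eq_empty_or_nonempty with he | hne
    · have hall : ∀ i, f₁ i = f₂ i ∧ f₁ i = h₁ i ∧ f₁ i = h₂ i := fun i =>
        hagt i (by simp [he])
      exact ⟨f₁, Or.inl rfl, Or.inl (funext fun i => ((hall i).1).symm),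
        Or.inl (funext fun i => (hall i).2.1), Or.inl (funext fun i => (hall i).2.2),
        fun i _ _ _ => rfl⟩
    · obtain ⟨J, hJt, hJmax⟩ := hlt.max t hne
      have hJd : ¬(f₁ J = f₂ J ∧ f₁ J = h₁ J ∧ f₁ J = h₂ J) := (Finset.mem_filter.1 hJt).2
      have habove : ∀ i, lt J i → f₁ i = f₂ i ∧ f₁ i = h₁ i ∧ f₁ i = h₂ i := by
        intro i hi
        by_contra h
        have hit : i ∈ t := Finset.mem_filter.2
          ⟨by by_contra hx; exact h (hag i hx), h⟩
        rcases eq_or_ne i J with rfl | hne'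
        · exact hlt.irr _ hi
        · exact hlt.asym hi (hJmax i hit hne')
      -- pointwise inequalities at J
      have key : ∀ f h : ℤ → G, flexR lt f h → (∀ i, lt J i → f i = h i) → f J ≤ h J := by
        intro f h hfh hab
        rcases hfh with rfl | ⟨j, hj, hjab⟩
        · exact le_rfl
        rcases hlt.tri j J with hlt' | rfl | hgt
        · exact (hjab J hlt').le
        · exact hj.le
        · exact absurd hj (by rw [hab j hgt]; exact lt_irrefl _)
      have hab11 : ∀ i, lt J i → f₁ i = h₁ i := fun i hi => (habove i hi).2.1
      have hab12 : ∀ i, lt J i → f₁ i = h₂ i := fun i hi => (habove i hi).2.2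
      have hab21 : ∀ i, lt J i → f₂ i = h₁ i := fun i hi =>
        ((habove i hi).1).symm.trans (habove i hi).2.1
      have hab22 : ∀ i, lt J i → f₂ i = h₂ i := fun i hi =>
        ((habove i hi).1).symm.trans (habove i hi).2.2
      obtain ⟨C, hC1, hC2, hC3, hC4⟩ := hG (f₁ J) (f₂ J) (h₁ J) (h₂ J)
        (key _ _ hf11 hab11) (key _ _ hf12 hab12) (key _ _ hf21 hab21) (key _ _ hf22 hab22)
      set tr : (ℤ → G) → ℤ → G := fun x i => if lt i J then x i else 1 with htr
      have htr_pos : ∀ (x : ℤ → G) i, lt i J → tr x i = x i := fun x i hi => if_pos hi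
      have htr_neg : ∀ (x : ℤ → G) i, ¬ lt i J → tr x i = 1 := fun x i hi => if_neg hi
      have hmain : ∃ cm : ℤ → G,
          (∀ i, ¬ lt i J → cm i = 1) ∧
          (f₁ J = C → flexR lt (tr f₁) cm) ∧ (f₂ J = C → flexR lt (tr f₂) cm) ∧
          (h₁ J = C → flexR lt cm (tr h₁)) ∧ (h₂ J = C → flexR lt cm (tr h₂)) ∧
          (∀ i, lt i J → f₁ i = f₂ i → f₁ i = h₁ i → f₁ i = h₂ i → cm i = f₁ i) := by
        by_cases hfa : f₁ J = C ∨ f₂ J = C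
        · by_cases hha : h₁ J = C ∨ h₂ J = C
          · -- both sides have active members: use the induction hypothesis
            set p₁ := if f₁ J = C then f₁ else f₂ with hp₁def
            set p₂ := if f₂ J = C then f₂ else f₁ with hp₂def
            set q₁ := if h₁ J = C then h₁ else h₂ with hq₁def
            set q₂ := if h₂ J = C then h₂ else h₁ with hq₂def
            have hp₁or : p₁ = f₁ ∨ p₁ = f₂ := by
              rw [hp₁def]; split <;> simp
            have hp₂or : p₂ = f₁ ∨ p₂ = f₂ := by
              rw [hp₂def]; split <;> simp
            have hq₁or : q₁ = h₁ ∨ q₁ = h₂ := by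
              rw [hq₁def]; split <;> simp
            have hq₂or : q₂ = h₁ ∨ q₂ = h₂ := by
              rw [hq₂def]; split <;> simp
            have hp₁C : p₁ J = C := by
              rw [hp₁def]; split
              · assumption
              · rcases hfa with h | h
                · contradiction
                · exact h
            have hp₂C : p₂ J = C := by
              rw [hp₂def]; split
              · assumption
              · rcases hfa with h | h
                · exact h
                · contradiction
            have hq₁C : q₁ J = C := by
              rw [hq₁def]; split
              · assumption
              · rcases hha with h | h
                · contradiction
                · exact h
            have hq₂C : q₂ J = C := by
              rw [hq₂def]; split
              · assumption
              · rcases hha with h | h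
                · exact h
                · contradiction
            have hp₁or4 : p₁ = f₁ ∨ p₁ = f₂ ∨ p₁ = h₁ ∨ p₁ = h₂ :=
              hp₁or.elim (fun h => Or.inl h) (fun h => Or.inr (Or.inl h))
            have hp₂or4 : p₂ = f₁ ∨ p₂ = f₂ ∨ p₂ = h₁ ∨ p₂ = h₂ :=
              hp₂or.elim (fun h => Or.inl h) (fun h => Or.inr (Or.inl h))
            have hq₁or4 : q₁ = f₁ ∨ q₁ = f₂ ∨ q₁ = h₁ ∨ q₁ = h₂ :=
              hq₁or.elim (fun h => Or.inr (Or.inr (Or.inl h)))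
                (fun h => Or.inr (Or.inr (Or.inr h)))
            have hq₂or4 : q₂ = f₁ ∨ q₂ = f₂ ∨ q₂ = h₁ ∨ q₂ = h₂ :=
              hq₂or.elim (fun h => Or.inr (Or.inr (Or.inl h)))
                (fun h => Or.inr (Or.inr (Or.inr h)))
            have hpq : ∀ p q : ℤ → G, (p = f₁ ∨ p = f₂) → (q = h₁ ∨ q = h₂) →
                flexR lt p q := by
              rintro p q (rfl | rfl) (rfl | rfl) <;> assumption
            have hpqab : ∀ p q : ℤ → G, (p = f₁ ∨ p = f₂) → (q = h₁ ∨ q = h₂) →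
                ∀ i, lt J i → p i = q i := by
              rintro p q (rfl | rfl) (rfl | rfl) <;> intro i hi
              · exact hab11 i hi
              · exact hab12 i hi
              · exact hab21 i hi
              · exact hab22 i hi
            have htr_flex : ∀ p q : ℤ → G, p J = C → q J = C →
                (∀ i, lt J i → p i = q i) → flexR lt p q → flexR lt (tr p) (tr q) := by
              intro p q hp hq hab hpq'
              rcases hpq' with heq | ⟨j, hj, hjab⟩
              · exact Or.inl (by rw [heq])
              rcases hlt.tri j J with hlt' | rfl | hgt
              · refine Or.inr ⟨j, ?_, fun i hi => ?_⟩
                · rw [htr_pos p j hlt', htr_pos q j hlt']; exact hj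
                · by_cases h : lt i J
                  · rw [htr_pos p i h, htr_pos q i h]; exact hjab i hi
                  · rw [htr_neg p i h, htr_neg q i h]
              · rw [hp, hq] at hj
                exact absurd hj (lt_irrefl _)
              · exact absurd hj (by rw [hab j hgt]; exact lt_irrefl _)
            have hcard : (t.erase J).card ≤ n := by
              have h1 : t.card ≤ s.card := Finset.card_filter_le _ _
              have h2 : (t.erase J).card = t.card - 1 := Finset.card_erase_of_mem hJt
              omega
            have hagval : ∀ i, i ∉ t.erase J → lt i J →
                ∀ x : ℤ → G, (x = f₁ ∨ x = f₂ ∨ x = h₁ ∨ x = h₂) → x i = f₁ i := by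
              intro i hi hlti x hx
              have hiJ : i ≠ J := fun h => hlt.irr _ (h ▸ hlti)
              have hit : i ∉ t := fun h => hi (Finset.mem_erase.2 ⟨hiJ, h⟩)
              obtain ⟨e1, e2, e3⟩ := hagt i hit
              rcases hx with h | h | h | h
              · rw [h]
              · rw [h]; exact e1.symm
              · rw [h]; exact e2.symm
              · rw [h]; exact e3.symm
            obtain ⟨cm, hm1, hm2, hm3, hm4, hm5⟩ := ih (t.erase J) hcard
              (tr p₁) (tr p₂) (tr q₁) (tr q₂)
              (by
                intro i hi
                by_cases h : lt i J
                · have e1 := hagval i hi h p₁ hp₁or4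
                  have e2 := hagval i hi h p₂ hp₂or4
                  have e3 := hagval i hi h q₁ hq₁or4
                  have e4 := hagval i hi h q₂ hq₂or4
                  rw [htr_pos _ _ h, htr_pos _ _ h, htr_pos _ _ h, htr_pos _ _ h,
                    e1, e2, e3, e4]
                  exact ⟨rfl, rfl, rfl⟩
                · rw [htr_neg _ _ h, htr_neg _ _ h, htr_neg _ _ h, htr_neg _ _ h]
                  exact ⟨rfl, rfl, rfl⟩)
              (htr_flex _ _ hp₁C hq₁C (hpqab _ _ hp₁or hq₁or) (hpq _ _ hp₁or hq₁or))
              (htr_flex _ _ hp₁C hq₂C (hpqab _ _ hp₁or hq₂or) (hpq _ _ hp₁or hq₂or))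
              (htr_flex _ _ hp₂C hq₁C (hpqab _ _ hp₂or hq₁or) (hpq _ _ hp₂or hq₁or))
              (htr_flex _ _ hp₂C hq₂C (hpqab _ _ hp₂or hq₂or) (hpq _ _ hp₂or hq₂or))
            have hcm1 : ∀ i, ¬ lt i J → cm i = 1 := by
              intro i hi
              have := hm5 i (by rw [htr_neg _ _ hi, htr_neg _ _ hi])
                (by rw [htr_neg _ _ hi, htr_neg _ _ hi])
                (by rw [htr_neg _ _ hi, htr_neg _ _ hi])
              rw [this, htr_neg _ _ hi]
            refine ⟨cm, hcm1, ?_, ?_, ?_, ?_, ?_⟩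
            · intro hA
              have : p₁ = f₁ := by rw [hp₁def, if_pos hA]
              rw [← this]; exact hm1
            · intro hA
              have : p₂ = f₂ := by rw [hp₂def, if_pos hA]
              rw [← this]; exact hm2
            · intro hB
              have : q₁ = h₁ := by rw [hq₁def, if_pos hB]
              rw [← this]; exact hm3
            · intro hB
              have : q₂ = h₂ := by rw [hq₂def, if_pos hB]
              rw [← this]; exact hm4
            · intro i hi e1 e2 e3
              have v : ∀ x : ℤ → G, (x = f₁ ∨ x = f₂ ∨ x = h₁ ∨ x = h₂) →
                  tr x i = f₁ i := by
                intro x hx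
                rw [htr_pos _ _ hi]
                rcases hx with h | h | h | h
                · rw [h]
                · rw [h]; exact e1.symm
                · rw [h]; exact e2.symm
                · rw [h]; exact e3.symm
              have := hm5 i (by rw [v p₁ hp₁or4, v p₂ hp₂or4])
                (by rw [v p₁ hp₁or4, v q₁ hq₁or4])
                (by rw [v p₁ hp₁or4, v q₂ hq₂or4])
              rw [this, v p₁ hp₁or4]
          · -- no active h: upper bound of truncated f's
            push_neg at hha
            obtain ⟨g, hg1, hg2, hg3⟩ := flex_ub hlt hdir t (tr f₁) (tr f₂)
              (by
                intro i hi
                by_cases h : lt i J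
                · rw [htr_pos _ _ h, htr_pos _ _ h]; exact (hagt i hi).1
                · rw [htr_neg _ _ h, htr_neg _ _ h])
            refine ⟨g, ?_, fun _ => hg1, fun _ => hg2, ?_, ?_, ?_⟩
            · intro i hi
              rw [hg3 i (by rw [htr_neg _ _ hi, htr_neg _ _ hi]), htr_neg _ _ hi]
            · intro h; exact absurd h hha.1
            · intro h; exact absurd h hha.2
            · intro i hi e1 _ _
              rw [hg3 i (by rw [htr_pos _ _ hi, htr_pos _ _ hi]; exact e1),
                htr_pos _ _ hi]
        · -- no active f: lower bound of truncated h's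
          push_neg at hfa
          obtain ⟨g, hg1, hg2, hg3⟩ := flex_lb hlt hdir t (tr h₁) (tr h₂)
            (by
              intro i hi
              by_cases h : lt i J
              · rw [htr_pos _ _ h, htr_pos _ _ h]
                exact ((hagt i hi).2.1).symm.trans (hagt i hi).2.2
              · rw [htr_neg _ _ h, htr_neg _ _ h])
          refine ⟨g, ?_, ?_, ?_, fun _ => hg1, fun _ => hg2, ?_⟩
          · intro i hi
            rw [hg3 i (by rw [htr_neg _ _ hi, htr_neg _ _ hi]), htr_neg _ _ hi]
          · intro h; exact absurd h hfa.1
          · intro h; exact absurd h hfa.2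
          · intro i hi e1 e2 e3
            rw [hg3 i (by rw [htr_pos _ _ hi, htr_pos _ _ hi]; exact e2.symm.trans e3),
              htr_pos _ _ hi]
            exact e2.symm
      -- assemble the interpolant
      obtain ⟨cm, hcm1, hcmf1, hcmf2, hcmh1, hcmh2, hcminv⟩ := hmain
      set c : ℤ → G := fun i => if lt i J then cm i else if i = J then C else f₁ i with hcdef
      have hcJ : c J = C := by
        rw [hcdef]; simp [hlt.irr J]
      have hclt : ∀ i, lt i J → c i = cm i := fun i hi => by
        rw [hcdef]; simp only [if_pos hi]
      have hcgt : ∀ i, lt J i → c i = f₁ i := fun i hi => by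
        have h1 : ¬ lt i J := fun h => hlt.asym hi h
        have h2 : i ≠ J := fun h => hlt.irr _ (h ▸ hi)
        rw [hcdef]; simp only [if_neg h1, if_neg h2]
      have hfc : ∀ f : ℤ → G, f J ≤ C → (f J = C → flexR lt (tr f) cm) →
          (∀ i, lt J i → f i = f₁ i) → flexR lt f c := by
        intro f hfC hact hab
        by_cases hA : f J = C
        · rcases hact hA with heq | ⟨j, hj, hjab⟩
          · refine Or.inl (funext fun i => ?_)
            rcases hlt.tri i J with h | rfl | h
            · rw [hclt i h, ← congrFun heq i, htr_pos _ _ h]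
            · rw [hcJ, hA]
            · rw [hcgt i h, hab i h]
          · have hjJ : lt j J := by
              rcases hlt.tri j J with h | rfl | h
              · exact h
              · rw [htr_neg _ _ (hlt.irr j), hcm1 j (hlt.irr j)] at hj
                exact absurd hj (lt_irrefl _)
              · have h1 : ¬ lt j J := fun h' => hlt.asym h h'
                rw [htr_neg _ _ h1, hcm1 j h1] at hj
                exact absurd hj (lt_irrefl _)
            refine Or.inr ⟨j, ?_, fun i hi => ?_⟩
            · rw [hclt j hjJ, ← htr_pos f j hjJ]; exact hj
            · rcases hlt.tri i J with h | rfl | h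
              · rw [hclt i h, ← hjab i hi, htr_pos _ _ h]
              · rw [hcJ, hA]
              · rw [hcgt i h, hab i h]
        · refine Or.inr ⟨J, ?_, fun i hi => ?_⟩
          · rw [hcJ]; exact lt_of_le_of_ne hfC hA
          · rw [hcgt i hi, hab i hi]
      have hch : ∀ h : ℤ → G, C ≤ h J → (h J = C → flexR lt cm (tr h)) →
          (∀ i, lt J i → h i = f₁ i) → flexR lt c h := by
        intro h hCh hact hab
        by_cases hB : h J = C
        · rcases hact hB with heq | ⟨j, hj, hjab⟩
          · refine Or.inl (funext fun i => ?_)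
            rcases hlt.tri i J with hh | rfl | hh
            · rw [hclt i hh, congrFun heq i, htr_pos _ _ hh]
            · rw [hcJ, hB]
            · rw [hcgt i hh, hab i hh]
          · have hjJ : lt j J := by
              rcases hlt.tri j J with hh | rfl | hh
              · exact hh
              · rw [htr_neg _ _ (hlt.irr j), hcm1 j (hlt.irr j)] at hj
                exact absurd hj (lt_irrefl _)
              · have h1 : ¬ lt j J := fun h' => hlt.asym hh h'
                rw [htr_neg _ _ h1, hcm1 j h1] at hj
                exact absurd hj (lt_irrefl _)
            refine Or.inr ⟨j, ?_, fun i hi => ?_⟩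
            · rw [hclt j hjJ, ← htr_pos h j hjJ]; exact hj
            · rcases hlt.tri i J with hh | rfl | hh
              · rw [hclt i hh, hjab i hi, htr_pos _ _ hh]
              · rw [hcJ, hB]
              · rw [hcgt i hh, hab i hh]
        · refine Or.inr ⟨J, ?_, fun i hi => ?_⟩
          · rw [hcJ]; exact lt_of_le_of_ne hCh (fun hh => hB hh.symm)
          · rw [hcgt i hi, hab i hi]
      refine ⟨c, hfc f₁ hC1 hcmf1 (fun i _ => rfl), hfc f₂ hC2 hcmf2
        (fun i hi => ((habove i hi).1).symm), hch h₁ hC3 hcmh1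
        (fun i hi => ((habove i hi).2.1).symm), hch h₂ hC4 hcmh2
        (fun i hi => ((habove i hi).2.2).symm), ?_⟩
      intro i e1 e2 e3
      have hiJ : i ≠ J := by
        rintro rfl
        exact hJd ⟨e1, e2, e3⟩
      rcases hlt.tri i J with h | rfl | h
      · rw [hclt i h, hcminv i h e1 e2 e3]
      · exact absurd rfl hiJ
      · exact hcgt i h

/-- The wreath-product order determined by an abstract order `lt` on the indices. -/
def gLE (lt : ℤ → ℤ → Prop) (p q : ℤ × (ℤ → G)) : Prop :=
  p.1 < q.1 ∨ (p.1 = q.1 ∧ flexR lt p.2 q.2)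

lemma gLE_refl (lt : ℤ → ℤ → Prop) (p : ℤ × (ℤ → G)) : gLE lt p p :=
  Or.inr ⟨rfl, Or.inl rfl⟩

lemma gRIP_fwd {lt : ℤ → ℤ → Prop} (hlt : LtOk lt)
    (hG : RIPWith ((· ≤ ·) : G → G → Prop))
    (hdir : ∀ x y : G, ∃ z : G, x ≤ z ∧ y ≤ z) :
    RIPWithOn {p : ℤ × (ℤ → G) | (Function.mulSupport p.2).Finite} (gLE lt) := by
  classical
  intro a₁ a₂ b₁ b₂ ha₁ ha₂ hb₁ hb₂ h11 h12 h21 h22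
  rcases lt_trichotomy a₁.1 a₂.1 with hn | hn | hn
  · exact ⟨a₂, ha₂, Or.inl hn, gLE_refl lt a₂, h21, h22⟩
  · rcases lt_trichotomy b₁.1 b₂.1 with hm | hm | hm
    · exact ⟨b₁, hb₁, h11, h21, gLE_refl lt b₁, Or.inl hm⟩
    · have hnm : a₁.1 < b₁.1 ∨ a₁.1 = b₁.1 := by
        rcases h11 with h | ⟨h, _⟩
        · exact Or.inl h
        · exact Or.inr h
      rcases hnm with hlt' | heq
      · -- strictly smaller first components: upper bound of the `a`-tails
        have hfin : ((Function.mulSupport a₁.2) ∪ (Function.mulSupport a₂.2)).Finite :=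
          Set.Finite.union ha₁ ha₂
        obtain ⟨g, hg1, hg2, hg3⟩ := flex_ub hlt hdir hfin.toFinset a₁.2 a₂.2 (by
          intro i hi
          rw [Set.Finite.mem_toFinset] at hi
          have h1 : a₁.2 i = 1 := by
            by_contra h
            exact hi (Or.inl h)
          have h2 : a₂.2 i = 1 := by
            by_contra h
            exact hi (Or.inr h)
          rw [h1, h2])
        refine ⟨(a₁.1, g), ?_, Or.inr ⟨rfl, hg1⟩, Or.inr ⟨hn.symm, hg2⟩,
          Or.inl hlt', Or.inl (by omega)⟩
        have hsub : Function.mulSupport g ⊆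
            (Function.mulSupport a₁.2) ∪ (Function.mulSupport a₂.2) := by
          intro i hi
          by_cases h : a₁.2 i = a₂.2 i
          · left
            have := hg3 i h
            intro hc
            exact hi (by rw [this, hc])
          · by_contra hc
            simp only [Set.mem_union, Function.mem_mulSupport, not_or, not_not] at hc
            exact h (by rw [hc.1, hc.2])
        exact Set.Finite.subset hfin hsub
      · -- equal first components throughout: the core interpolation lemma
        have e2 : a₂.1 = b₁.1 := hn ▸ heq
        have e3 : b₂.1 = b₁.1 := hm.symm
        have getflex : ∀ p q : ℤ × (ℤ → G), p.1 = q.1 → gLE lt p q → flexR lt p.2 q.2 := by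
          intro p q hpq h
          rcases h with h | ⟨_, h⟩
          · omega
          · exact h
        have hfin : ((Function.mulSupport a₁.2) ∪ (Function.mulSupport a₂.2) ∪
            (Function.mulSupport b₁.2) ∪ (Function.mulSupport b₂.2)).Finite :=
          Set.Finite.union (Set.Finite.union (Set.Finite.union ha₁ ha₂) hb₁) hb₂
        obtain ⟨g, hg1, hg2, hg3, hg4, hg5⟩ := flex_rip hlt hG hdir
          hfin.toFinset.card hfin.toFinset le_rfl a₁.2 a₂.2 b₁.2 b₂.2
          (by
            intro i hi
            rw [Set.Finite.mem_toFinset] at hi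
            have h1 : a₁.2 i = 1 := by
              by_contra h; exact hi (Or.inl (Or.inl (Or.inl h)))
            have h2 : a₂.2 i = 1 := by
              by_contra h; exact hi (Or.inl (Or.inl (Or.inr h)))
            have h3 : b₁.2 i = 1 := by
              by_contra h; exact hi (Or.inl (Or.inr h))
            have h4 : b₂.2 i = 1 := by
              by_contra h; exact hi (Or.inr h)
            rw [h1, h2, h3, h4]
            exact ⟨rfl, rfl, rfl⟩)
          (getflex _ _ heq h11) (getflex _ _ (heq.trans hm) h12)
          (getflex _ _ (e2 : a₂.1 = b₁.1) h21) (getflex _ _ (e2.trans hm) h22)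
        refine ⟨(a₁.1, g), ?_, Or.inr ⟨rfl, hg1⟩, Or.inr ⟨hn.symm, hg2⟩,
          Or.inr ⟨heq, hg3⟩, Or.inr ⟨heq.trans hm, hg4⟩⟩
        have hsub : Function.mulSupport g ⊆
            (Function.mulSupport a₁.2) ∪ ((Function.mulSupport a₁.2) ∪
              (Function.mulSupport a₂.2) ∪ (Function.mulSupport b₁.2) ∪
              (Function.mulSupport b₂.2)) := by
          intro i hi
          by_cases h : a₁.2 i = a₂.2 i ∧ a₁.2 i = b₁.2 i ∧ a₁.2 i = b₂.2 i
          · left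
            have := hg5 i h.1 h.2.1 h.2.2
            intro hc
            exact hi (by rw [this, hc])
          · right
            by_contra hc
            simp only [Set.mem_union, Function.mem_mulSupport, not_or, not_not] at hc
            obtain ⟨⟨⟨c1, c2⟩, c3⟩, c4⟩ := hc
            exact h (by rw [c1, c2, c3, c4]; exact ⟨rfl, rfl, rfl⟩)
        exact Set.Finite.subset (Set.Finite.union ha₁ hfin) hsub
    · exact ⟨b₂, hb₂, h12, h22, Or.inl hm, gLE_refl lt b₂⟩
  · exact ⟨a₁, ha₁, gLE_refl lt a₁, Or.inl hn, h11, h12⟩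

lemma gRIP_bwd {lt : ℤ → ℤ → Prop} (hlt : LtOk lt)
    (hR : RIPWithOn {p : ℤ × (ℤ → G) | (Function.mulSupport p.2).Finite} (gLE lt)) :
    RIPWith ((· ≤ ·) : G → G → Prop) := by
  classical
  intro a₁ a₂ b₁ b₂ h11 h12 h21 h22
  set δ : G → ℤ × (ℤ → G) := fun x => ((0 : ℤ), fun i => if i = 0 then x else 1) with hδ
  have hδval : ∀ (x : G) i, i ≠ 0 → (δ x).2 i = 1 := by
    intro x i hi
    show (if i = 0 then x else 1) = 1
    rw [if_neg hi]
  have hδ0 : ∀ x : G, (δ x).2 0 = x := by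
    intro x
    show (if (0:ℤ) = 0 then x else 1) = x
    rw [if_pos rfl]
  have hδS : ∀ x, δ x ∈ {p : ℤ × (ℤ → G) | (Function.mulSupport p.2).Finite} := by
    intro x
    refine Set.Finite.subset (Set.finite_singleton (0 : ℤ)) ?_
    intro i hi
    rw [Function.mem_mulSupport] at hi
    by_contra h
    exact hi (hδval x i h)
  have hδle : ∀ x y : G, x ≤ y → gLE lt (δ x) (δ y) := by
    intro x y hxy
    refine Or.inr ⟨rfl, ?_⟩
    rcases eq_or_ne x y with rfl | hne
    · exact Or.inl rfl
    · refine Or.inr ⟨0, ?_, fun i hi => ?_⟩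
      · rw [hδ0, hδ0]
        exact lt_of_le_of_ne hxy hne
      · have hi0 : i ≠ 0 := fun h => hlt.irr _ (h ▸ hi)
        rw [hδval x i hi0, hδval y i hi0]
  obtain ⟨c, hcS, hc1, hc2, hc3, hc4⟩ := hR (δ a₁) (δ a₂) (δ b₁) (δ b₂)
    (hδS _) (hδS _) (hδS _) (hδS _)
    (hδle _ _ h11) (hδle _ _ h12) (hδle _ _ h21) (hδle _ _ h22)
  have hc10 : c.1 = 0 := by
    have l1 : (0 : ℤ) < c.1 ∨ (0 : ℤ) = c.1 := by
      rcases hc1 with h | ⟨h, _⟩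
      · exact Or.inl h
      · exact Or.inr h
    have l2 : c.1 < 0 ∨ c.1 = (0 : ℤ) := by
      rcases hc3 with h | ⟨h, _⟩
      · exact Or.inl h
      · exact Or.inr h
    omega
  have getflexA : ∀ x : G, gLE lt (δ x) c → flexR lt (δ x).2 c.2 := by
    intro x h
    rcases h with h | ⟨_, h⟩
    · have hx1 : (δ x).1 = 0 := rfl
      omega
    · exact h
  have getflexB : ∀ y : G, gLE lt c (δ y) → flexR lt c.2 (δ y).2 := by
    intro y h
    rcases h with h | ⟨_, h⟩
    · have hy1 : (δ y).1 = 0 := rfl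
      omega
    · exact h
  have hA1 := getflexA a₁ hc1
  have hA2 := getflexA a₂ hc2
  have hB1 := getflexB b₁ hc3
  have hB2 := getflexB b₂ hc4
  -- the interpolant has trivial values strictly above 0
  have hval : ∀ j : ℤ, lt 0 j → c.2 j = 1 := by
    by_contra hex
    push_neg at hex
    obtain ⟨j₀, hj₀lt, hj₀⟩ := hex
    have hTfin : {j : ℤ | lt 0 j ∧ c.2 j ≠ 1}.Finite :=
      Set.Finite.subset hcS (fun j hj => hj.2)
    have hTne : hTfin.toFinset.Nonempty :=
      ⟨j₀, by rw [Set.Finite.mem_toFinset]; exact ⟨hj₀lt, hj₀⟩⟩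
    obtain ⟨J, hJT, hJmax⟩ := hlt.max hTfin.toFinset hTne
    rw [Set.Finite.mem_toFinset] at hJT
    have hJ0 : J ≠ 0 := fun h => hlt.irr _ (h ▸ hJT.1)
    have hJpos : 1 < c.2 J := by
      rcases hA1 with heq | ⟨j, hj, hab⟩
      · exact absurd ((congrFun heq J).symm.trans (hδval a₁ J hJ0)) hJT.2
      · rcases hlt.tri j J with h | rfl | h
        · exact absurd ((hab J h).symm.trans (hδval a₁ J hJ0)) hJT.2
        · rw [hδval a₁ j hJ0] at hj
          exact hj
        · have hj0 : j ≠ 0 := fun h' => hlt.irr _ (h' ▸ hlt.tr hJT.1 h)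
          rw [hδval a₁ j hj0] at hj
          have hjT : j ∈ hTfin.toFinset := by
            rw [Set.Finite.mem_toFinset]
            exact ⟨hlt.tr hJT.1 h, fun h' => by rw [h'] at hj; exact lt_irrefl _ hj⟩
          have hjJ : j ≠ J := fun h' => hlt.irr _ (h' ▸ h)
          exact absurd (hJmax j hjT hjJ) (fun h' => hlt.asym h h')
    have hJneg : c.2 J < 1 := by
      rcases hB1 with heq | ⟨j, hj, hab⟩
      · exact absurd ((congrFun heq J).trans (hδval b₁ J hJ0)) hJT.2
      · rcases hlt.tri j J with h | rfl | h
        · exact absurd ((hab J h).trans (hδval b₁ J hJ0)) hJT.2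
        · rw [hδval b₁ j hJ0] at hj
          exact hj
        · have hj0 : j ≠ 0 := fun h' => hlt.irr _ (h' ▸ hlt.tr hJT.1 h)
          rw [hδval b₁ j hj0] at hj
          have hjT : j ∈ hTfin.toFinset := by
            rw [Set.Finite.mem_toFinset]
            exact ⟨hlt.tr hJT.1 h, fun h' => by rw [h'] at hj; exact lt_irrefl _ hj⟩
          have hjJ : j ≠ J := fun h' => hlt.irr _ (h' ▸ h)
          exact absurd (hJmax j hjT hjJ) (fun h' => hlt.asym h h')
    exact lt_irrefl _ (hJpos.trans hJneg)
  have hax : ∀ x : G, flexR lt (δ x).2 c.2 → x ≤ c.2 0 := by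
    intro x hx
    rcases hx with heq | ⟨j, hj, hab⟩
    · rw [← congrFun heq 0, hδ0]
    · rcases hlt.tri j 0 with h | rfl | h
      · rw [← hab 0 h, hδ0]
      · rw [hδ0] at hj
        exact hj.le
      · have hj0 : j ≠ 0 := fun h' => hlt.irr _ (h' ▸ h)
        rw [hδval x j hj0, hval j h] at hj
        exact absurd hj (lt_irrefl _)
  have hbx : ∀ y : G, flexR lt c.2 (δ y).2 → c.2 0 ≤ y := by
    intro y hy
    rcases hy with heq | ⟨j, hj, hab⟩
    · rw [congrFun heq 0, hδ0]
    · rcases hlt.tri j 0 with h | rfl | h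
      · rw [hab 0 h, hδ0]
      · rw [hδ0] at hj
        exact hj.le
      · have hj0 : j ≠ 0 := fun h' => hlt.irr _ (h' ▸ h)
        rw [hδval y j hj0, hval j h] at hj
        exact absurd hj (lt_irrefl _)
  exact ⟨c.2 0, hax a₁ hA1, hax a₂ hA2, hbx b₁ hB1, hbx b₂ hB2⟩


lemma rLE_iff_gLE (p q : ℤ × (ℤ → G)) :
    rLE p q ↔ gLE ((· < ·) : ℤ → ℤ → Prop) p q := by
  have hfst : (zwrMul (zwrInv p) q).1 = -p.1 + q.1 := rfl
  have hsnd : ∀ i, (zwrMul (zwrInv p) q).2 i = (p.2 (i - p.1))⁻¹ * q.2 (i + -p.1) :=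
    fun i => rfl
  constructor
  · rintro (rfl | hpos)
    · exact gLE_refl _ p
    · rcases hpos with h | ⟨h0, j, hj, hab⟩
      · left
        rw [hfst] at h
        omega
      · right
        rw [hfst] at h0
        have h1 : p.1 = q.1 := by omega
        refine ⟨h1, Or.inr ⟨j - p.1, ?_, fun i hi => ?_⟩⟩
        · rw [hsnd j] at hj
          have e : j + -p.1 = j - p.1 := by ring
          rw [e] at hj
          exact one_lt_invmul.1 hj
        · have hh := hab (i + p.1) (by omega)
          rw [hsnd (i + p.1)] at hh
          have e1 : i + p.1 - p.1 = i := by ring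
          have e2 : i + p.1 + -p.1 = i := by ring
          rw [e1, e2] at hh
          exact inv_mul_eq_one.1 hh
  · rintro (h | ⟨h1, hflex⟩)
    · right
      left
      rw [hfst]
      omega
    · rcases hflex with heq | ⟨j, hj, hab⟩
      · left
        exact Prod.ext h1 heq
      · right
        right
        refine ⟨by rw [hfst]; omega, j + p.1, ?_, fun i hi => ?_⟩
        · rw [hsnd (j + p.1)]
          have e1 : j + p.1 - p.1 = j := by ring
          have e2 : j + p.1 + -p.1 = j := by ring
          rw [e1, e2]
          exact one_lt_invmul.2 hj
        · rw [hsnd i]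
          have e : i + -p.1 = i - p.1 := by ring
          rw [e]
          exact inv_mul_eq_one.2 (hab (i - p.1) (by omega))

lemma lLE_iff_gLE (p q : ℤ × (ℤ → G)) :
    lLE p q ↔ gLE (fun a b : ℤ => b < a) p q := by
  have hfst : (zwrMul (zwrInv p) q).1 = -p.1 + q.1 := rfl
  have hsnd : ∀ i, (zwrMul (zwrInv p) q).2 i = (p.2 (i - p.1))⁻¹ * q.2 (i + -p.1) :=
    fun i => rfl
  constructor
  · rintro (rfl | hpos)
    · exact gLE_refl _ p
    · rcases hpos with h | ⟨h0, j, hj, hab⟩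
      · left
        rw [hfst] at h
        omega
      · right
        rw [hfst] at h0
        have h1 : p.1 = q.1 := by omega
        refine ⟨h1, Or.inr ⟨j - p.1, ?_, fun i hi => ?_⟩⟩
        · rw [hsnd j] at hj
          have e : j + -p.1 = j - p.1 := by ring
          rw [e] at hj
          exact one_lt_invmul.1 hj
        · have hh := hab (i + p.1) (by omega)
          rw [hsnd (i + p.1)] at hh
          have e1 : i + p.1 - p.1 = i := by ring
          have e2 : i + p.1 + -p.1 = i := by ring
          rw [e1, e2] at hh
          exact inv_mul_eq_one.1 hh
  · rintro (h | ⟨h1, hflex⟩)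
    · right
      left
      rw [hfst]
      omega
    · rcases hflex with heq | ⟨j, hj, hab⟩
      · left
        exact Prod.ext h1 heq
      · right
        right
        refine ⟨by rw [hfst]; omega, j + p.1, ?_, fun i hi => ?_⟩
        · rw [hsnd (j + p.1)]
          have e1 : j + p.1 - p.1 = j := by ring
          have e2 : j + p.1 + -p.1 = j := by ring
          rw [e1, e2]
          exact one_lt_invmul.2 hj
        · rw [hsnd i]
          have e : i + -p.1 = i - p.1 := by ring
          rw [e]
          exact inv_mul_eq_one.2 (hab (i - p.1) (by omega))

lemma transfer_RIPWithOn {lt : ℤ → ℤ → Prop}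
    (le : (ℤ × (ℤ → G)) → (ℤ × (ℤ → G)) → Prop)
    (hiff : ∀ p q, le p q ↔ gLE lt p q)
    (h : RIPWithOn {p : ℤ × (ℤ → G) | (Function.mulSupport p.2).Finite} (gLE lt)) :
    RIPWithOn {p : ℤ × (ℤ → G) | (Function.mulSupport p.2).Finite} le := by
  intro a₁ a₂ b₁ b₂ ha₁ ha₂ hb₁ hb₂ h11 h12 h21 h22
  obtain ⟨c, hcS, hc1, hc2, hc3, hc4⟩ := h a₁ a₂ b₁ b₂ ha₁ ha₂ hb₁ hb₂
    ((hiff _ _).1 h11) ((hiff _ _).1 h12) ((hiff _ _).1 h21) ((hiff _ _).1 h22)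
  exact ⟨c, hcS, (hiff _ _).2 hc1, (hiff _ _).2 hc2, (hiff _ _).2 hc3, (hiff _ _).2 hc4⟩

lemma transfer_RIPWithOn' {lt : ℤ → ℤ → Prop}
    (le : (ℤ × (ℤ → G)) → (ℤ × (ℤ → G)) → Prop)
    (hiff : ∀ p q, le p q ↔ gLE lt p q)
    (h : RIPWithOn {p : ℤ × (ℤ → G) | (Function.mulSupport p.2).Finite} le) :
    RIPWithOn {p : ℤ × (ℤ → G) | (Function.mulSupport p.2).Finite} (gLE lt) := by
  intro a₁ a₂ b₁ b₂ ha₁ ha₂ hb₁ hb₂ h11 h12 h21 h22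
  obtain ⟨c, hcS, hc1, hc2, hc3, hc4⟩ := h a₁ a₂ b₁ b₂ ha₁ ha₂ hb₁ hb₂
    ((hiff _ _).2 h11) ((hiff _ _).2 h12) ((hiff _ _).2 h21) ((hiff _ _).2 h22)
  exact ⟨c, hcS, (hiff _ _).1 hc1, (hiff _ _).1 hc2, (hiff _ _).1 hc3, (hiff _ _).1 hc4⟩

end Core

/-- For a directed po-group `G`, the following are equivalent:
`G` satisfies RIP; the right wreath product `ℤ →wr G` satisfies RIP; the left
wreath product `ℤ ←wr G` satisfies RIP. -/
theorem rip_iff_zwr_rip {G : Type*} [Group G] [PartialOrder G]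
    [CovariantClass G G (· * ·) (· ≤ ·)]
    [CovariantClass G G (Function.swap (· * ·)) (· ≤ ·)]
    (hdir : ∀ x y : G, ∃ z : G, x ≤ z ∧ y ≤ z) :
    (RIPWith ((· ≤ ·) : G → G → Prop) ↔ RIPWithOn (zwrS G) rLE) ∧
    (RIPWith ((· ≤ ·) : G → G → Prop) ↔ RIPWithOn (zwrS G) lLE) := by
  constructor
  · constructor
    · intro hG
      exact transfer_RIPWithOn rLE (fun p q => rLE_iff_gLE p q)
        (gRIP_fwd ltOk_lt hG hdir)
    · intro hR
      exact gRIP_bwd ltOk_lt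
        (transfer_RIPWithOn' rLE (fun p q => rLE_iff_gLE p q) hR)
  · constructor
    · intro hG
      exact transfer_RIPWithOn lLE (fun p q => lLE_iff_gLE p q)
        (gRIP_fwd ltOk_gt hG hdir)
    · intro hR
      exact gRIP_bwd ltOk_gt
        (transfer_RIPWithOn' lLE (fun p q => lLE_iff_gLE p q) hR)
end
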